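/- arXiv:2202.09853 — 6 statements merged into one kernel-verified Lean document; each statement's English description precedes it below -/
import Mathlib

section
/- Let G be a connected simple graph on vertex set [N], let e = uv be an edge of G, and let G△e be the graph on [N] ∪ {N+1} with edges E(G) ∪ {u(N+1), v(N+1)}. If c is a D(G)-draconian sequence, then the sequence α(c) = (c_1,...,c_N, 1) is a D(G△e)-draconian sequence. Moreover α is injective. -/
/-- `c : V → ℕ` is a `D(H)`-draconian sequence for the simple graph `H` on `V`:
the entries sum to `|V| - 1` and, for every nonempty `S ⊆ V`, the partial sum over `S`
is strictly less than the size of `⋃_{i ∈ S} N_{D(H)}(i)`, where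
`N_{D(H)}(i) = {ī} ∪ {j̄ : ij ∈ E(H)}`. -/
def DraconianD {V : Type*} [Fintype V] (H : SimpleGraph V) (c : V → ℕ) : Prop :=
  (∑ v, c v) = Fintype.card V - 1 ∧
    ∀ S : Finset V, S.Nonempty →
      (∑ i ∈ S, c i) < ((S : Set V) ∪ ⋃ i ∈ S, H.neighborSet i).ncard

/-- `G △ e` for `e = uv`: add a new vertex (`none`) adjacent to exactly `u` and `v`. -/
def triExt {V : Type*} (G : SimpleGraph V) (u v : V) : SimpleGraph (Option V) :=
  SimpleGraph.fromRel fun a b =>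
    (∃ x y, a = some x ∧ b = some y ∧ G.Adj x y) ∨ (a = none ∧ (b = some u ∨ b = some v))

/-!
Every `D(G)`-neighbourhood reappears, shifted by `some`, inside the corresponding
`D(G △ e)`-neighbourhood. A set containing the new vertex gains it in its neighbourhood,
which pays for its entry `1`; and on its own the new vertex already sees itself and `u`.
-/

open Finset

variable {V : Type*}

/-- `N_{D(H)}(S)`, with the barred copy `ī` of a vertex identified with `i`. -/
def dNeighborSet (H : SimpleGraph V) (S : Finset V) : Set V :=
  (S : Set V) ∪ ⋃ i ∈ S, H.neighborSet i

lemma dNeighborSet_mono (H : SimpleGraph V) {S T : Finset V} (h : S ⊆ T) :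
    dNeighborSet H S ⊆ dNeighborSet H T :=
  Set.union_subset_union (coe_subset.2 h) (Set.biUnion_subset_biUnion_left (coe_subset.2 h))

lemma Finset.exists_eq_map_some_or_eq_insertNone (S : Finset (Option V)) :
    ∃ T : Finset V, S = T.map Function.Embedding.some ∨ S = insertNone T := by
  classical
  refine ⟨eraseNone S, ?_⟩
  by_cases h : none ∈ S
  · exact Or.inr (by rw [insertNone_eraseNone, insert_eq_of_mem h])
  · exact Or.inl (by rw [map_some_eraseNone, erase_eq_of_notMem h])

lemma Finset.map_some_subset_insertNone (S : Finset V) :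
    S.map Function.Embedding.some ⊆ insertNone S := by
  intro o ho
  obtain ⟨x, hx, rfl⟩ := mem_map.1 ho
  exact some_mem_insertNone.2 hx

section triExt

variable (G : SimpleGraph V) (u v : V)

lemma triExt_adj_some {x y : V} (h : G.Adj x y) : (triExt G u v).Adj (some x) (some y) :=
  ⟨by simpa using h.ne, Or.inl (Or.inl ⟨x, y, rfl, rfl, h⟩)⟩

lemma triExt_adj_none_some_left : (triExt G u v).Adj none (some u) :=
  ⟨by simp, Or.inl (Or.inr ⟨rfl, Or.inl rfl⟩)⟩

lemma image_some_dNeighborSet_subset (S : Finset V) :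
    some '' dNeighborSet G S ⊆ dNeighborSet (triExt G u v) (S.map Function.Embedding.some) := by
  rintro _ ⟨x, hx | hx, rfl⟩
  · exact Or.inl (by simpa using hx)
  · obtain ⟨i, hi, hadj⟩ := Set.mem_iUnion₂.1 hx
    exact Or.inr (Set.mem_biUnion (by simpa using hi) (triExt_adj_some G u v hadj))

lemma insert_none_image_some_dNeighborSet_subset (S : Finset V) :
    insert none (some '' dNeighborSet G S) ⊆ dNeighborSet (triExt G u v) (insertNone S) :=
  Set.insert_subset (Or.inl none_mem_insertNone)
    ((image_some_dNeighborSet_subset G u v S).trans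
      (dNeighborSet_mono _ (map_some_subset_insertNone S)))

variable [Finite V]

lemma ncard_dNeighborSet_le_map_some (S : Finset V) :
    (dNeighborSet G S).ncard ≤
      (dNeighborSet (triExt G u v) (S.map Function.Embedding.some)).ncard := by
  rw [← Set.ncard_image_of_injective _ (Option.some_injective V)]
  exact Set.ncard_le_ncard (image_some_dNeighborSet_subset G u v S)

lemma ncard_dNeighborSet_lt_insertNone (S : Finset V) :
    (dNeighborSet G S).ncard < (dNeighborSet (triExt G u v) (insertNone S)).ncard := by
  have h := Set.ncard_le_ncard (insert_none_image_some_dNeighborSet_subset G u v S)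
  rwa [Set.ncard_insert_of_notMem (by simp),
    Set.ncard_image_of_injective _ (Option.some_injective V), Nat.succ_le_iff] at h

lemma two_le_ncard_dNeighborSet_insertNone (S : Finset V) :
    2 ≤ (dNeighborSet (triExt G u v) (insertNone S)).ncard := by
  have hsub : ({none, some u} : Set (Option V)) ⊆ dNeighborSet (triExt G u v) (insertNone S) :=
    Set.insert_subset (Or.inl none_mem_insertNone) (Set.singleton_subset_iff.2
      (Or.inr (Set.mem_biUnion none_mem_insertNone (triExt_adj_none_some_left G u v))))
  simpa [Set.ncard_pair] using Set.ncard_le_ncard hsub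

end triExt

theorem DraconianD.triExt_optionElim [Fintype V] {G : SimpleGraph V} {c : V → ℕ}
    (hc : DraconianD G c) (u v : V) : DraconianD (triExt G u v) (fun o => o.elim 1 c) := by
  obtain ⟨hsum, hlt⟩ := hc
  have hcard : 0 < Fintype.card V := Fintype.card_pos_iff.2 ⟨u⟩
  refine ⟨?_, fun S hS => ?_⟩
  · rw [Fintype.sum_option, Fintype.card_option]
    simp only [Option.elim]
    omega
  change _ < (dNeighborSet (triExt G u v) S).ncard
  obtain ⟨T, rfl | rfl⟩ := S.exists_eq_map_some_or_eq_insertNone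
  · rw [sum_map]
    exact (hlt T (by simpa using hS)).trans_le (ncard_dNeighborSet_le_map_some G u v T)
  · rw [sum_insertNone]
    rcases T.eq_empty_or_nonempty with rfl | hT
    · simpa [Nat.succ_le_iff] using two_le_ncard_dNeighborSet_insertNone G u v ∅
    · have hgrow := ncard_dNeighborSet_lt_insertNone G u v T
      have hT' : _ < (dNeighborSet G T).ncard := hlt T hT
      simp only [Option.elim]
      omega

theorem stmt2_general (N : ℕ) (G : SimpleGraph (Fin N))
    (u v : Fin N) :
    (∀ c : Fin N → ℕ, DraconianD G c →
        DraconianD (triExt G u v) (fun o => o.elim 1 c)) ∧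
      Function.Injective fun (c : Fin N → ℕ) (o : Option (Fin N)) => o.elim 1 c :=
  ⟨fun _ hc => hc.triExt_optionElim u v, fun _ _ h => funext fun x => congrFun h (some x)⟩

/-- If `G` is a connected graph on `[N]`, `e = uv` an edge, and `c` a `D(G)`-draconian
sequence, then `α(c) = (c, 1)` is a `D(G △ e)`-draconian sequence; moreover `α` is
injective. -/
theorem stmt2 (N : ℕ) (G : SimpleGraph (Fin N)) (hconn : G.Connected)
    (u v : Fin N) (he : G.Adj u v) :
    (∀ c : Fin N → ℕ, DraconianD G c →
        DraconianD (triExt G u v) (fun o => o.elim 1 c)) ∧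
      Function.Injective fun (c : Fin N → ℕ) (o : Option (Fin N)) => o.elim 1 c :=
  stmt2_general N G u v
end

section
/- Let N >= 2 and let M be a matching of the complete graph K_N with M elements (a set of pairwise disjoint edges). Let K_N△M denote the graph obtained from K_N by adding, for each edge e = uv in the matching, a new vertex w_e adjacent to exactly u and v. Then the number of D(K_N△M)-draconian sequences equals 3^M · C(2(N-1), N-1). -/
/-- `K_N △ 𝓜` for a matching `𝓜` with `M` edges `{f i, g i}`: the complete graph on
`Fin N` (the `inl` vertices) together with, for each `i : Fin M`, a new vertex `inr i`
adjacent to exactly `f i` and `g i`. -/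
def MatchTri (N M : ℕ) (f g : Fin M → Fin N) : SimpleGraph (Fin N ⊕ Fin M) :=
  SimpleGraph.fromRel fun a b =>
    (∃ x y : Fin N, a = Sum.inl x ∧ b = Sum.inl y ∧ x ≠ y) ∨
    (∃ i : Fin M, a = Sum.inr i ∧ (b = Sum.inl (f i) ∨ b = Sum.inl (g i)))

open Finset Function

section Load

def IsAdmissible (p : (ℕ × ℕ) × ℕ) : Prop :=
  p.2 ≤ 2 ∧ 1 ≤ p.1.1 + p.1.2 + p.2

def joinLoad : Fin 3 × ℕ × ℕ → (ℕ × ℕ) × ℕ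
  | (0, x, y) => ((x + 1, y), 0)
  | (1, x, y) => ((x, y), 1)
  | (2, 0, y) => ((0, y + 1), 0)
  | (2, x + 1, y) => ((x, y), 2)

def splitLoad : (ℕ × ℕ) × ℕ → Fin 3 × ℕ × ℕ
  | ((x + 1, y), 0) => (0, x, y)
  | ((0, y), 0) => (2, 0, y - 1)
  | ((x, y), 1) => (1, x, y)
  | ((x, y), _) => (2, x + 1, y)

theorem splitLoad_joinLoad (q : Fin 3 × ℕ × ℕ) : splitLoad (joinLoad q) = q := by
  obtain ⟨ε, x, y⟩ := q
  fin_cases ε <;> cases x <;> simp [splitLoad, joinLoad]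

theorem joinLoad_splitLoad {p : (ℕ × ℕ) × ℕ} (hp : IsAdmissible p) :
    joinLoad (splitLoad p) = p := by
  obtain ⟨⟨x, y⟩, a⟩ := p
  obtain ⟨ha, hpos⟩ := hp
  interval_cases a <;> rcases x with _ | x <;> rcases y with _ | y <;>
    simp_all [splitLoad, joinLoad]

theorem weight_joinLoad (q : Fin 3 × ℕ × ℕ) :
    (joinLoad q).1.1 + (joinLoad q).1.2 + (joinLoad q).2 = q.2.1 + q.2.2 + 1 := by
  obtain ⟨ε, x, y⟩ := q
  fin_cases ε <;> cases x <;> simp [joinLoad] <;> omega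

theorem isAdmissible_joinLoad (q : Fin 3 × ℕ × ℕ) : IsAdmissible (joinLoad q) := by
  refine ⟨?_, by rw [weight_joinLoad]; omega⟩
  obtain ⟨ε, x, y⟩ := q
  fin_cases ε <;> cases x <;> simp [joinLoad]

theorem weight_eq_weight_splitLoad_add_one {p : (ℕ × ℕ) × ℕ} (hp : IsAdmissible p) :
    p.1.1 + p.1.2 + p.2 = (splitLoad p).2.1 + (splitLoad p).2.2 + 1 := by
  conv_lhs => rw [← joinLoad_splitLoad hp]
  exact weight_joinLoad _

variable {ι W : Type*} [Fintype ι] (σ : W → ℕ) (n : ℕ)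

def admissibleEquiv :
    {q : ((ι → ℕ × ℕ) × W) × (ι → ℕ) //
      ∑ i, ((q.1.1 i).1 + (q.1.1 i).2 + q.2 i) + σ q.1.2 = n + Fintype.card ι ∧
        ∀ i, IsAdmissible (q.1.1 i, q.2 i)} ≃
    (ι → Fin 3) × {q : (ι → ℕ × ℕ) × W //
      ∑ i, ((q.1 i).1 + (q.1 i).2) + σ q.2 = n} where
  toFun q := (fun i => (splitLoad (q.1.1.1 i, q.1.2 i)).1,
    ⟨(fun i => (splitLoad (q.1.1.1 i, q.1.2 i)).2, q.1.1.2), by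
      obtain ⟨⟨⟨s, u⟩, w⟩, hsum, hadm⟩ := q
      dsimp only at hsum hadm ⊢
      rw [sum_congr rfl fun i _ => weight_eq_weight_splitLoad_add_one (hadm i), sum_add_distrib,
        sum_const, card_univ, smul_eq_mul, mul_one] at hsum
      omega⟩)
  invFun q := ⟨((fun i => (joinLoad (q.1 i, q.2.1.1 i)).1, q.2.1.2),
      fun i => (joinLoad (q.1 i, q.2.1.1 i)).2), by
    obtain ⟨ε, ⟨s, u⟩, hsum⟩ := q
    refine ⟨?_, fun i => isAdmissible_joinLoad _⟩
    dsimp only at hsum ⊢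
    rw [sum_congr rfl fun i _ => weight_joinLoad _, sum_add_distrib, sum_const, card_univ,
      smul_eq_mul, mul_one]
    dsimp only
    omega⟩
  left_inv q := by
    obtain ⟨⟨⟨s, u⟩, w⟩, hsum, hadm⟩ := q
    refine Subtype.ext (Prod.ext (Prod.ext (funext fun i => ?_) rfl) (funext fun i => ?_)) <;>
      simp [joinLoad_splitLoad (hadm i)]
  right_inv q := by
    obtain ⟨ε, ⟨s, u⟩, hsum⟩ := q
    refine Prod.ext (funext fun i => ?_) (Subtype.ext (Prod.ext (funext fun i => ?_) rfl)) <;>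
      simp [splitLoad_joinLoad]

end Load

section Matching

variable {ι V : Type*} {f g : ι → V}

def unmatched (f g : ι → V) : Set V := (Set.range (Sum.elim f g))ᶜ

open Classical in
noncomputable def matchingFunEquiv (hfg : Injective (Sum.elim f g)) :
    (V → ℕ) ≃ (ι → ℕ × ℕ) × (unmatched f g → ℕ) :=
  (Equiv.arrowCongr (((Equiv.ofInjective _ hfg).sumCongr (Equiv.refl _)).trans
      (Equiv.Set.sumCompl _)).symm (Equiv.refl ℕ)).trans
    ((Equiv.sumArrowEquivProdArrow _ _ _).trans
      (Equiv.prodCongr ((Equiv.sumArrowEquivProdArrow _ _ _).trans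
        (Equiv.arrowProdEquivProdArrow _ _ _).symm) (Equiv.refl _)))

@[simp]
theorem matchingFunEquiv_apply (hfg : Injective (Sum.elim f g)) (b : V → ℕ) :
    matchingFunEquiv hfg b = (fun i => (b (f i), b (g i)), fun u : unmatched f g => b u) :=
  rfl

variable [Fintype ι] [Fintype V]

open Classical in
theorem sum_eq_sum_matched_add_sum_unmatched (hfg : Injective (Sum.elim f g)) (b : V → ℕ) :
    ∑ v, b v = ∑ i, (b (f i) + b (g i)) + ∑ u : unmatched f g, b u := by
  rw [← Equiv.sum_comp (((Equiv.ofInjective _ hfg).sumCongr (Equiv.refl _)).trans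
      (Equiv.Set.sumCompl _)) b]
  simp only [Equiv.trans_apply, Equiv.sumCongr_apply, Equiv.coe_refl, Fintype.sum_sum_type,
    Sum.map_inl, Sum.map_inr, Equiv.ofInjective_apply, Equiv.Set.sumCompl_apply_inl,
    Equiv.Set.sumCompl_apply_inr, Sum.elim_inl, Sum.elim_inr, id_eq, sum_add_distrib, unmatched,
    Nat.add_left_cancel_iff]
  -- the two sides use different `Fintype` instances on `unmatched f g`
  congr
  exact Subsingleton.elim _ _

open Classical in
theorem card_admissible (hfg : Injective (Sum.elim f g)) (n : ℕ) :
    Nat.card {c : V ⊕ ι → ℕ // ∑ x, c x = n + Fintype.card ι ∧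
      ∀ i, IsAdmissible ((c (.inl (f i)), c (.inl (g i))), c (.inr i))} =
      3 ^ Fintype.card ι * Nat.card {b : V → ℕ // ∑ v, b v = n} := by
  let σ : (unmatched f g → ℕ) → ℕ := fun u => ∑ x, u x
  let e := (Equiv.sumArrowEquivProdArrow V ι ℕ).trans
    ((matchingFunEquiv hfg).prodCongr (Equiv.refl _))
  calc _ = Nat.card {q : ((ι → ℕ × ℕ) × (unmatched f g → ℕ)) × (ι → ℕ) //
          ∑ i, ((q.1.1 i).1 + (q.1.1 i).2 + q.2 i) + σ q.1.2 = n + Fintype.card ι ∧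
            ∀ i, IsAdmissible (q.1.1 i, q.2 i)} :=
        Nat.card_congr <| e.subtypeEquiv fun c => by
          rw [Fintype.sum_sum_type, sum_eq_sum_matched_add_sum_unmatched hfg fun v => c (.inl v)]
          simp [e, σ, Finset.sum_add_distrib, add_right_comm]
    _ = 3 ^ Fintype.card ι * Nat.card {q : (ι → ℕ × ℕ) × (unmatched f g → ℕ) //
          ∑ i, ((q.1 i).1 + (q.1 i).2) + σ q.2 = n} := by
        simp [Nat.card_congr (admissibleEquiv σ n)]
    _ = _ := by
        congr 1
        exact Nat.card_congr ((matchingFunEquiv hfg).subtypeEquiv fun b => by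
          simp [σ, sum_eq_sum_matched_add_sum_unmatched hfg b]).symm

end Matching

theorem card_sum_eq_choose (V : Type*) [Fintype V] (n : ℕ) :
    Nat.card {b : V → ℕ // ∑ v, b v = n} = (Fintype.card V + n - 1).choose n := by
  classical
  rw [← Nat.card_congr (Sym.equivNatSumOfFintype V n), Nat.card_eq_fintype_card,
    Sym.card_sym_eq_choose]

section Draconian

variable {V : Type*} [Fintype V] {H : SimpleGraph V}

theorem SimpleGraph.card_le_ncard_union_iUnion_neighborSet {S t : Finset V}
    (ht : ∀ x ∈ t, x ∈ S ∨ ∃ s ∈ S, H.Adj s x) :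
    #t ≤ ((S : Set V) ∪ ⋃ i ∈ S, H.neighborSet i).ncard := by
  rw [← Set.ncard_coe_finset]
  exact Set.ncard_le_ncard fun x hx => by simpa using ht x hx

theorem SimpleGraph.ncard_union_iUnion_neighborSet_le_card {S t : Finset V}
    (ht : ∀ x, x ∈ S ∨ (∃ s ∈ S, H.Adj s x) → x ∈ t) :
    ((S : Set V) ∪ ⋃ i ∈ S, H.neighborSet i).ncard ≤ #t := by
  rw [← Set.ncard_coe_finset]
  exact Set.ncard_le_ncard fun x hx => ht x (by simpa using hx)

variable {c : V → ℕ} {v : V} {t : Finset V}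

theorem DraconianD.lt_card_of_closedNbhd_subset (hc : DraconianD H c)
    (ht : ∀ x, x = v ∨ H.Adj v x → x ∈ t) : c v < #t :=
  calc c v = ∑ x ∈ {v}, c x := (sum_singleton c v).symm
    _ < _ := hc.2 {v} (singleton_nonempty v)
    _ ≤ #t := SimpleGraph.ncard_union_iUnion_neighborSet_le_card fun x hx =>
      ht x (by simpa using hx)

theorem DraconianD.one_le_sum_of_closedNbhd_subset (hc : DraconianD H c)
    (hV : 1 < Fintype.card V) (ht : ∀ x, x = v ∨ H.Adj v x → x ∈ t) :
    1 ≤ ∑ x ∈ t, c x := by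
  classical
  have htotal := hc.1
  have hsplit := sum_compl_add_sum t c
  rcases tᶜ.eq_empty_or_nonempty with hempty | hne
  · rw [hempty, sum_empty] at hsplit
    omega
  · have hlt := hc.2 tᶜ hne
    have hle : ((↑tᶜ : Set V) ∪ ⋃ i ∈ tᶜ, H.neighborSet i).ncard ≤ #{v}ᶜ :=
      SimpleGraph.ncard_union_iUnion_neighborSet_le_card fun x hx => by
        rw [mem_compl, mem_singleton]
        rintro rfl
        rcases hx with hx | ⟨s, hs, hsx⟩
        · exact mem_compl.mp hx (ht x (.inl rfl))
        · exact mem_compl.mp hs (ht s (.inr hsx.symm))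
    rw [card_compl, card_singleton] at hle
    omega

end Draconian

section MatchTri

variable {N M : ℕ} {f g : Fin M → Fin N}

@[simp] theorem matchTri_adj_inl_inl {x y : Fin N} :
    (MatchTri N M f g).Adj (.inl x) (.inl y) ↔ x ≠ y := by
  simp [MatchTri, eq_comm]

@[simp] theorem matchTri_adj_inl_inr {x : Fin N} {i : Fin M} :
    (MatchTri N M f g).Adj (.inl x) (.inr i) ↔ x = f i ∨ x = g i := by
  simp [MatchTri, eq_comm]

@[simp] theorem matchTri_adj_inr_inl {x : Fin N} {i : Fin M} :
    (MatchTri N M f g).Adj (.inr i) (.inl x) ↔ x = f i ∨ x = g i := by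
  rw [SimpleGraph.adj_comm, matchTri_adj_inl_inr]

@[simp] theorem matchTri_not_adj_inr_inr {i j : Fin M} :
    ¬ (MatchTri N M f g).Adj (.inr i) (.inr j) := by
  simp [MatchTri]

def triangle (f g : Fin M → Fin N) (i : Fin M) : Finset (Fin N ⊕ Fin M) :=
  {.inl (f i), .inl (g i), .inr i}

variable (hmatch : Injective (Sum.elim f g))
include hmatch

theorem card_triangle (i : Fin M) : #(triangle f g i) = 3 := by
  have := (Sum.elim_injective.mp hmatch).2.2 i i
  simp [triangle, this]

theorem sum_triangle (c : Fin N ⊕ Fin M → ℕ) (i : Fin M) :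
    ∑ x ∈ triangle f g i, c x = c (.inl (f i)) + c (.inl (g i)) + c (.inr i) := by
  have := (Sum.elim_injective.mp hmatch).2.2 i i
  simp [triangle, this, add_assoc]

theorem pairwise_disjoint_triangle : Pairwise (Disjoint on triangle f g) := by
  obtain ⟨hf, hg, hfg⟩ := Sum.elim_injective.mp hmatch
  intro i j hij
  simp [onFun, triangle, hf.ne hij.symm, hg.ne hij.symm, hfg j i, (hfg i j).symm, hij.symm]

omit hmatch in
theorem closedNbhd_inr_subset_triangle (i : Fin M) :
    ∀ x, x = .inr i ∨ (MatchTri N M f g).Adj (.inr i) x → x ∈ triangle f g i := by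
  rintro (x | j) hx <;> simp_all [triangle]

variable {c : Fin N ⊕ Fin M → ℕ} {S : Finset (Fin N ⊕ Fin M)}

theorem sum_lt_ncard_of_inl_mem (hsum : ∑ x, c x = N + M - 1)
    (htri : ∀ i, 1 ≤ ∑ x ∈ triangle f g i, c x) {v : Fin N} (hv : .inl v ∈ S) :
    ∑ x ∈ S, c x < ((S : Set _) ∪ ⋃ x ∈ S, (MatchTri N M f g).neighborSet x).ncard := by
  classical
  set T : Finset (Fin M) := {i | ¬Disjoint (triangle f g i) S}
  have hreach :
      N + #T ≤ ((S : Set _) ∪ ⋃ x ∈ S, (MatchTri N M f g).neighborSet x).ncard := by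
    refine le_of_eq_of_le (by simp) (SimpleGraph.card_le_ncard_union_iUnion_neighborSet
      (t := univ.disjSum T) ?_)
    rintro (u | i) hx
    · rcases eq_or_ne u v with rfl | hu
      · exact .inl hv
      · exact .inr ⟨.inl v, hv, by simpa using hu.symm⟩
    · obtain ⟨x, hxT, hxS⟩ := not_disjoint_iff.mp (by simpa [T] using hx)
      simp only [triangle, mem_insert, mem_singleton] at hxT
      rcases hxT with rfl | rfl | rfl
      · exact .inr ⟨_, hxS, by simp⟩
      · exact .inr ⟨_, hxS, by simp⟩
      · exact .inl hxS
  have hrest : ∑ x ∈ S, c x + ∑ i ∈ Tᶜ, ∑ x ∈ triangle f g i, c x ≤ ∑ x, c x := by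
    have hdisj : Disjoint S (Tᶜ.biUnion (triangle f g)) := by
      simp only [disjoint_biUnion_right, mem_compl]
      intro i hi
      simpa [T, disjoint_comm] using hi
    rw [← sum_biUnion ((pairwise_disjoint_triangle hmatch).set_pairwise _), ← sum_union hdisj]
    exact sum_le_sum_of_subset (subset_univ _)
  have hcount : #Tᶜ ≤ ∑ i ∈ Tᶜ, ∑ x ∈ triangle f g i, c x := by
    simpa using card_nsmul_le_sum Tᶜ _ 1 fun i _ => htri i
  rw [card_compl, Fintype.card_fin] at hcount
  have hTM : #T ≤ M := by simpa using card_le_univ T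
  have hN := v.pos
  omega

theorem sum_lt_ncard_of_forall_inr (hw : ∀ i, c (.inr i) ≤ 2) (hS : S.Nonempty)
    (hinr : ∀ v : Fin N, .inl v ∉ S) :
    ∑ x ∈ S, c x < ((S : Set _) ∪ ⋃ x ∈ S, (MatchTri N M f g).neighborSet x).ncard := by
  classical
  set B : Finset (Fin M) := {i | .inr i ∈ S}
  have hSB : S = B.map .inr := by
    ext (u | i) <;> simp [B, hinr]
  have hB : B.Nonempty := by simpa [hSB] using hS
  have hreach :
      3 * #B ≤ ((S : Set _) ∪ ⋃ x ∈ S, (MatchTri N M f g).neighborSet x).ncard := by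
    refine le_of_eq_of_le ?_ (SimpleGraph.card_le_ncard_union_iUnion_neighborSet
      (t := B.biUnion (triangle f g)) ?_)
    · rw [card_biUnion ((pairwise_disjoint_triangle hmatch).set_pairwise _)]
      simp [card_triangle hmatch, mul_comm]
    · simp only [mem_biUnion]
      rintro x ⟨i, hi, hx⟩
      have hiS : .inr i ∈ S := by simpa [B] using hi
      simp only [triangle, mem_insert, mem_singleton] at hx
      rcases hx with rfl | rfl | rfl
      · exact .inr ⟨_, hiS, by simp⟩
      · exact .inr ⟨_, hiS, by simp⟩
      · exact .inl hiS
  calc ∑ x ∈ S, c x = ∑ i ∈ B, c (.inr i) := by rw [hSB, sum_map]; rfl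
    _ ≤ ∑ _i ∈ B, 2 := sum_le_sum fun i _ => hw i
    _ < 3 * #B := by rw [sum_const, smul_eq_mul]; linarith [hB.card_pos]
    _ ≤ _ := hreach

theorem draconianD_matchTri_iff :
    DraconianD (MatchTri N M f g) c ↔ ∑ x, c x = N + M - 1 ∧
      ∀ i, IsAdmissible ((c (.inl (f i)), c (.inl (g i))), c (.inr i)) := by
  have hcard : Fintype.card (Fin N ⊕ Fin M) = N + M := by simp
  constructor
  · intro hc
    refine ⟨hcard ▸ hc.1, fun i => ⟨?_, ?_⟩⟩
    · have := hc.lt_card_of_closedNbhd_subset (closedNbhd_inr_subset_triangle i)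
      rw [card_triangle hmatch] at this
      omega
    · rw [← sum_triangle hmatch]
      exact hc.one_le_sum_of_closedNbhd_subset
        (Fintype.one_lt_card_iff.mpr ⟨.inl (f i), .inr i, by simp⟩)
        (closedNbhd_inr_subset_triangle i)
  · rintro ⟨hsum, hadm⟩
    refine ⟨hcard ▸ hsum, fun S hS => ?_⟩
    by_cases h : ∃ v, .inl v ∈ S
    · obtain ⟨v, hv⟩ := h
      exact sum_lt_ncard_of_inl_mem hmatch hsum
        (fun i => sum_triangle hmatch c i ▸ (hadm i).2) hv
    · simp only [not_exists] at h
      exact sum_lt_ncard_of_forall_inr hmatch (fun i => (hadm i).1) hS h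

end MatchTri

theorem stmt4_general (N M : ℕ) (f g : Fin M → Fin N)
    (hmatch : Function.Injective (Sum.elim f g : Fin M ⊕ Fin M → Fin N)) :
    Set.ncard {c : Fin N ⊕ Fin M → ℕ | DraconianD (MatchTri N M f g) c} =
      3 ^ M * Nat.choose (2 * (N - 1)) (N - 1) := by
  -- rules out `N = 0 < M`, where `N + M - 1 ≠ (N - 1) + M`
  have h2M : 2 * M ≤ N := by simpa [two_mul] using Fintype.card_le_of_injective _ hmatch
  have hset : {c : Fin N ⊕ Fin M → ℕ | DraconianD (MatchTri N M f g) c} =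
      {c | ∑ x, c x = (N - 1) + Fintype.card (Fin M) ∧
        ∀ i, IsAdmissible ((c (.inl (f i)), c (.inl (g i))), c (.inr i))} := by
    ext c
    rw [Set.mem_ofPred_eq, draconianD_matchTri_iff hmatch, Fintype.card_fin,
      show N + M - 1 = N - 1 + M by omega]
    rfl
  rw [hset, ← Nat.card_coe_set_eq, Set.coe_ofPred, card_admissible hmatch, card_sum_eq_choose,
    Fintype.card_fin, Fintype.card_fin]
  congr 2
  omega

/-- Theorem 2.9: if `𝓜` is an `M`-element matching of `K_N` (encoded by endpoint maps
`f g : Fin M → Fin N` whose `2M` values are pairwise distinct), then the number of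
`D(K_N △ 𝓜)`-draconian sequences is `3^M · C(2(N-1), N-1)`. -/
theorem stmt4 (N M : ℕ) (hN : 2 ≤ N) (f g : Fin M → Fin N)
    (hmatch : Function.Injective (Sum.elim f g : Fin M ⊕ Fin M → Fin N)) :
    Set.ncard {c : Fin N ⊕ Fin M → ℕ | DraconianD (MatchTri N M f g) c} =
      3 ^ M * Nat.choose (2 * (N - 1)) (N - 1) :=
  stmt4_general N M f g hmatch
end

section
/- Let N >= 2, let M be an M-element matching of K_N, and let e = uv be an edge of K_N disjoint from all edges of M. Let G = K_N△M (add a triangle vertex w_f for each f in M) and G' = K_N△(M ∪ {e}) with new vertex w. If c is a D(G)-draconian sequence, then exactly one of the following sequences is a D(G')-draconian sequence obtained from c: either (c, 1) + e_v − e_w (when (c,1) + e_v − e_w was not already obtained by the β-map applied to some D(G)-draconian sequence), or (c,1) − e_u + e_w. In particular, the map γ sending c to the appropriate one of these two sequences is an injection from D(G)-draconian sequences to D(G')-draconian sequences. -/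
/-- The map `α`: append an entry `1` at the new vertex `w` (= `none`). -/
def alphaMap {W : Type*} (c : W → ℕ) : Option W → ℕ := fun o => o.elim 1 c

/-- The map `β = α + e_u − e_w`: increase the `u`-entry by `1` and put `0` at the new
vertex `w`. -/
def betaMap {W : Type*} [DecidableEq W] (u : W) (c : W → ℕ) : Option W → ℕ :=
  fun o => o.elim 0 fun x => c x + if x = u then 1 else 0

open scoped Classical in
/-- The map `γ`: send `c` to `α(c) − e_u + e_w` if `α(c) + e_v − e_w` already lies in the
image under `β` of the set of `D(G)`-draconian sequences, and to `α(c) + e_v − e_w`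
otherwise. -/
noncomputable def gammaMap {W : Type*} [Fintype W] [DecidableEq W] (G : SimpleGraph W)
    (u v : W) (c : W → ℕ) : Option W → ℕ :=
  if betaMap v c ∈ betaMap u '' {c' | DraconianD G c'} then
    (fun o => o.elim 2 fun x => c x - if x = u then 1 else 0)
  else betaMap v c

-- union neighborhood
def NS {W : Type*} [Fintype W] (H : SimpleGraph W) (S : Finset W) : Set W :=
  (S : Set W) ∪ ⋃ i ∈ S, H.neighborSet i

lemma mem_NS {W : Type*} [Fintype W] {H : SimpleGraph W} {S : Finset W} {x : W} :
    x ∈ NS H S ↔ x ∈ S ∨ ∃ i ∈ S, H.Adj i x := by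
  simp [NS, SimpleGraph.mem_neighborSet]

lemma draconianD_iff {W : Type*} [Fintype W] (H : SimpleGraph W) (c : W → ℕ) :
    DraconianD H c ↔ ((∑ v, c v) = Fintype.card W - 1 ∧
      ∀ S : Finset W, S.Nonempty → (∑ i ∈ S, c i) < (NS H S).ncard) := Iff.rfl

lemma adj_triExt_some_some {W : Type*} (G : SimpleGraph W) (u v : W) (x y : W) :
    (triExt G u v).Adj (some x) (some y) ↔ G.Adj x y := by
  simp only [triExt, SimpleGraph.fromRel_adj]
  constructor
  · rintro ⟨hne, h | h⟩
    · rcases h with ⟨a, b, ha, hb, hab⟩ | ⟨h, -⟩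
      · cases ha; cases hb; exact hab
      · cases h
    · rcases h with ⟨a, b, ha, hb, hab⟩ | ⟨h, -⟩
      · cases ha; cases hb; exact hab.symm
      · cases h
  · intro h
    exact ⟨by simpa using h.ne, Or.inl (Or.inl ⟨x, y, rfl, rfl, h⟩)⟩

lemma adj_triExt_none {W : Type*} (G : SimpleGraph W) (u v : W) (o : Option W) :
    (triExt G u v).Adj none o ↔ o = some u ∨ o = some v := by
  simp only [triExt, SimpleGraph.fromRel_adj]
  constructor
  · rintro ⟨hne, h | h⟩
    · rcases h with ⟨a, b, ha, -⟩ | ⟨-, h⟩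
      · cases ha
      · exact h
    · rcases h with ⟨a, b, -, hb, -⟩ | ⟨h, -⟩
      · cases hb
      · exact absurd h.symm hne
  · rintro (rfl | rfl)
    · exact ⟨by simp, Or.inl (Or.inr ⟨by trivial, Or.inl rfl⟩)⟩
    · exact ⟨by simp, Or.inl (Or.inr ⟨by trivial, Or.inr rfl⟩)⟩

lemma sum_option_finset {W : Type*} [DecidableEq W] (T : Finset (Option W)) (d : Option W → ℕ) :
    ∑ o ∈ T, d o = (if none ∈ T then d none else 0) + ∑ x ∈ T.eraseNone, d (some x) := by
  have himg : (Finset.eraseNone T).image some = T.erase none := by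
    ext o
    cases o with
    | none => simp
    | some x => simp [Finset.mem_eraseNone]
  have : ∑ x ∈ T.eraseNone, d (some x) = ∑ o ∈ T.erase none, d o := by
    rw [← himg, Finset.sum_image (by intros a _ b _ h; exact Option.some_injective _ h)]
  rw [this]
  by_cases hn : none ∈ T
  · rw [if_pos hn, Finset.add_sum_erase _ _ hn]
  · rw [if_neg hn, Finset.erase_eq_of_notMem hn, zero_add]

lemma NS_image_subset {W : Type*} [Fintype W] (G : SimpleGraph W) (u v : W)
    (T : Finset (Option W)) :
    some '' NS G T.eraseNone ⊆ NS (triExt G u v) T := by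
  rintro _ ⟨x, hx, rfl⟩
  rcases mem_NS.1 hx with hx | ⟨i, hi, hadj⟩
  · exact mem_NS.2 (Or.inl (by simpa using Finset.mem_eraseNone.1 hx))
  · exact mem_NS.2 (Or.inr ⟨some i, by simpa using Finset.mem_eraseNone.1 hi,
      (adj_triExt_some_some G u v i x).2 hadj⟩)

lemma ncard_NS_pos {W : Type*} [Fintype W] (H : SimpleGraph W) {S : Finset W}
    (hS : S.Nonempty) : 0 < (NS H S).ncard := by
  obtain ⟨x, hx⟩ := hS
  have : x ∈ NS H S := mem_NS.2 (Or.inl hx)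
  exact Set.ncard_pos (Set.toFinite _) |>.2 ⟨x, this⟩

lemma ncard_succ_le {W : Type*} [Fintype W] (A : Set W) (B : Set (Option W))
    (h1 : some '' A ⊆ B) (h2 : none ∈ B) : A.ncard + 1 ≤ B.ncard := by
  have hsub : insert none (some '' A) ⊆ B := Set.insert_subset h2 h1
  calc A.ncard + 1 = (insert (none : Option W) (some '' A)).ncard := by
        rw [Set.ncard_insert_of_notMem (by simp) (Set.toFinite _),
          Set.ncard_image_of_injective _ (Option.some_injective W)]
      _ ≤ B.ncard := Set.ncard_le_ncard hsub (Set.toFinite _)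

lemma lemA {W : Type*} [Fintype W] [DecidableEq W] (G : SimpleGraph W) (u v : W)
    (c : W → ℕ) (hc : DraconianD G c) : DraconianD (triExt G u v) (betaMap v c) := by
  obtain ⟨hsum, hsub⟩ := hc
  have hWpos : 1 ≤ Fintype.card W := Fintype.card_pos_iff.2 ⟨u⟩
  constructor
  · rw [Fintype.sum_option]
    have : ∑ x : W, betaMap v c (some x) = (∑ x : W, c x) + 1 := by
      simp only [betaMap, Option.elim]
      rw [Finset.sum_add_distrib, Finset.sum_ite_eq' Finset.univ v (fun _ => 1),
        if_pos (Finset.mem_univ v)]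
    simp only [betaMap, Option.elim] at this ⊢
    rw [this, hsum]
    simp [Fintype.card_option]
    omega
  · intro T hT
    show ∑ o ∈ T, betaMap v c o < (NS (triExt G u v) T).ncard
    set S : Finset W := T.eraseNone with hSdef
    have hsumT : ∑ o ∈ T, betaMap v c o
        = (∑ x ∈ S, c x) + (if v ∈ S then 1 else 0) := by
      rw [sum_option_finset]
      simp only [betaMap, Option.elim, ite_self]
      rw [Finset.sum_add_distrib, Finset.sum_ite_eq' S v (fun _ => 1)]
      simp [hSdef]
    by_cases hSne : S.Nonempty
    · have h1 : ∑ x ∈ S, c x < (NS G S).ncard := hsub S hSne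
      by_cases hkey : v ∈ S ∨ none ∈ T
      · -- none ∈ NS' T
        have hnone : none ∈ NS (triExt G u v) T := by
          rcases hkey with hv | hn
          · exact mem_NS.2 (Or.inr ⟨some v, by simpa using Finset.mem_eraseNone.1 hv,
              ((triExt G u v).adj_symm ((adj_triExt_none G u v (some v)).2 (Or.inr rfl)))⟩)
          · exact mem_NS.2 (Or.inl hn)
        have hcard := ncard_succ_le (NS G S) (NS (triExt G u v) T)
          (NS_image_subset G u v T) hnone
        rw [hsumT]
        have : (if v ∈ S then 1 else 0) ≤ 1 := by split <;> omega
        omega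
      · push_neg at hkey
        obtain ⟨hv, hn⟩ := hkey
        rw [hsumT, if_neg hv, add_zero]
        calc ∑ x ∈ S, c x < (NS G S).ncard := h1
          _ = (some '' NS G S).ncard :=
            (Set.ncard_image_of_injective _ (Option.some_injective W)).symm
          _ ≤ (NS (triExt G u v) T).ncard :=
            Set.ncard_le_ncard (NS_image_subset G u v T) (Set.toFinite _)
    · -- S empty, so T = {none}-ish: none ∈ T
      have hn : none ∈ T := by
        obtain ⟨o, ho⟩ := hT
        cases o with
        | none => exact ho
        | some x => exact absurd (Finset.mem_eraseNone.2 ho) (fun h => hSne ⟨x, h⟩)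
      have h0 : ∑ o ∈ T, betaMap v c o = 0 := by
        rw [hsumT]
        have : S = ∅ := Finset.not_nonempty_iff_eq_empty.1 hSne
        simp [this]
      rw [h0]
      exact ncard_NS_pos _ ⟨none, hn⟩

section Match
variable {N M : ℕ} {f g : Fin M → Fin N}

lemma madj_inl_inl {x y : Fin N} :
    (MatchTri N M f g).Adj (Sum.inl x) (Sum.inl y) ↔ x ≠ y := by
  simp only [MatchTri, SimpleGraph.fromRel_adj]
  constructor
  · rintro ⟨hne, h | h⟩ <;>
    · rcases h with ⟨a, b, ha, hb, hab⟩ | ⟨i, hi, -⟩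
      · cases ha; cases hb; first | exact hab | exact hab.symm
      · cases hi
  · intro h
    exact ⟨by simpa using h, Or.inl (Or.inl ⟨x, y, rfl, rfl, h⟩)⟩

lemma madj_inr {i : Fin M} {b : Fin N ⊕ Fin M} :
    (MatchTri N M f g).Adj (Sum.inr i) b ↔ b = Sum.inl (f i) ∨ b = Sum.inl (g i) := by
  simp only [MatchTri, SimpleGraph.fromRel_adj]
  constructor
  · rintro ⟨hne, h | h⟩
    · rcases h with ⟨a, b', ha, -⟩ | ⟨j, hj, hb⟩
      · cases ha
      · cases hj; exact hb
    · rcases h with ⟨a, b', -, hb', -⟩ | ⟨j, hbj, h2⟩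
      · cases hb'
      · rw [hbj] at *; cases h2 <;> simp_all
  · rintro (rfl | rfl)
    · exact ⟨by simp, Or.inl (Or.inr ⟨i, rfl, Or.inl rfl⟩)⟩
    · exact ⟨by simp, Or.inl (Or.inr ⟨i, rfl, Or.inr rfl⟩)⟩

lemma inl_mem_NS {S : Finset (Fin N ⊕ Fin M)} {a : Fin N} (ha : Sum.inl a ∈ S)
    (b : Fin N) : Sum.inl b ∈ NS (MatchTri N M f g) S := by
  by_cases hab : b = a
  · exact mem_NS.2 (Or.inl (hab ▸ ha))
  · exact mem_NS.2 (Or.inr ⟨Sum.inl a, ha, madj_inl_inl.2 (fun h => hab h.symm)⟩)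

end Match

lemma lemB (N M : ℕ) (hN : 2 ≤ N) (f g : Fin M → Fin N) (u v : Fin N) (huv : u ≠ v)
    (hdisj : ∀ i : Fin M, u ≠ f i ∧ u ≠ g i ∧ v ≠ f i ∧ v ≠ g i)
    (c c' : Fin N ⊕ Fin M → ℕ) (hc : DraconianD (MatchTri N M f g) c)
    (hc' : DraconianD (MatchTri N M f g) c')
    (hrel : betaMap (Sum.inl v) c = betaMap (Sum.inl u) c') :
    DraconianD (triExt (MatchTri N M f g) (Sum.inl u) (Sum.inl v))
      (fun o => o.elim 2 fun x => c x - if x = Sum.inl u then 1 else 0) := by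
  set G := MatchTri N M f g with hG
  set G' := triExt G (Sum.inl u) (Sum.inl v) with hG'
  set u' : Fin N ⊕ Fin M := Sum.inl u with hu'def
  set v' : Fin N ⊕ Fin M := Sum.inl v with hv'def
  have huv' : u' ≠ v' := fun h => huv (Sum.inl_injective h)
  set e : Fin N ⊕ Fin M → ℕ := fun x => c x - if x = u' then 1 else 0 with hedef
  have hrel' : ∀ x, c x + (if x = v' then 1 else 0) = c' x + (if x = u' then 1 else 0) :=
    fun x => congrFun hrel (some x)
  have hcu : c u' = c' u' + 1 := by have := hrel' u'; simp [if_neg huv'] at this; omega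
  have pe : ∀ x, e x + (if x = u' then 1 else 0) = c x := by
    intro x
    by_cases hx : x = u'
    · subst hx; simp [hedef, hcu]
    · simp [hedef, hx]
  have pe' : ∀ x, e x + (if x = v' then 1 else 0) = c' x := by
    intro x
    by_cases hx : x = u'
    · subst hx
      rw [if_neg huv', add_zero]
      have he : e u' = c u' - 1 := by simp [hedef]
      omega
    · have h1 := hrel' x
      rw [if_neg hx, add_zero] at h1
      simp only [hedef, if_neg hx, Nat.sub_zero]
      exact h1
  have hele : ∀ x, e x ≤ c x := fun x => Nat.sub_le _ _
  obtain ⟨hsum, hsub0⟩ := hc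
  obtain ⟨hsum', hsub0'⟩ := hc'
  have hsub : ∀ S : Finset (Fin N ⊕ Fin M), S.Nonempty →
      (∑ i ∈ S, c i) < (NS G S).ncard := hsub0
  have hsub' : ∀ S : Finset (Fin N ⊕ Fin M), S.Nonempty →
      (∑ i ∈ S, c' i) < (NS G S).ncard := hsub0'
  clear hsub0 hsub0'
  have hcardV : Fintype.card (Fin N ⊕ Fin M) = N + M := by simp
  rw [hcardV] at hsum hsum'
  -- sums over finsets
  have heS : ∀ S : Finset (Fin N ⊕ Fin M),
      (∑ x ∈ S, e x) + (if u' ∈ S then 1 else 0) = ∑ x ∈ S, c x := by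
    intro S
    calc (∑ x ∈ S, e x) + (if u' ∈ S then 1 else 0)
        = ∑ x ∈ S, (e x + if x = u' then 1 else 0) := by
          rw [Finset.sum_add_distrib, Finset.sum_ite_eq' S u' (fun _ => 1)]
      _ = ∑ x ∈ S, c x := Finset.sum_congr rfl (fun x _ => pe x)
  have heS' : ∀ S : Finset (Fin N ⊕ Fin M),
      (∑ x ∈ S, e x) + (if v' ∈ S then 1 else 0) = ∑ x ∈ S, c' x := by
    intro S
    calc (∑ x ∈ S, e x) + (if v' ∈ S then 1 else 0)
        = ∑ x ∈ S, (e x + if x = v' then 1 else 0) := by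
          rw [Finset.sum_add_distrib, Finset.sum_ite_eq' S v' (fun _ => 1)]
      _ = ∑ x ∈ S, c' x := Finset.sum_congr rfl (fun x _ => pe' x)
  constructor
  · -- total sum
    rw [Fintype.sum_option]
    have h1 := heS Finset.univ
    rw [if_pos (Finset.mem_univ u')] at h1
    have : ∑ x : Fin N ⊕ Fin M, (fun o : Option (Fin N ⊕ Fin M) =>
        o.elim 2 fun x => c x - if x = u' then 1 else 0) (some x) = ∑ x, e x := rfl
    rw [this]
    simp only [Option.elim]
    have : Fintype.card (Option (Fin N ⊕ Fin M)) = N + M + 1 := by simp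
    rw [this]
    omega
  · intro T hT
    show ∑ o ∈ T, (fun o : Option (Fin N ⊕ Fin M) =>
        o.elim 2 fun x => c x - if x = u' then 1 else 0) o < (NS G' T).ncard
    set S : Finset (Fin N ⊕ Fin M) := T.eraseNone with hSdef
    have hsumT : ∑ o ∈ T, (fun o : Option (Fin N ⊕ Fin M) =>
        o.elim 2 fun x => c x - if x = u' then 1 else 0) o
        = (if none ∈ T then 2 else 0) + ∑ x ∈ S, e x := by
      rw [sum_option_finset]
      rfl
    rw [hsumT]
    by_cases hn : none ∈ T
    · rw [if_pos hn]
      -- big inclusion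
      have hincl : some '' (NS G S ∪ {u', v'}) ⊆ NS G' T := by
        rintro _ ⟨x, hx | hx, rfl⟩
        · exact NS_image_subset G u' v' T ⟨x, hx, rfl⟩
        · have hadj : G'.Adj none (some x) := (adj_triExt_none G u' v' (some x)).2
            (by rcases hx with rfl | rfl
                · exact Or.inl rfl
                · exact Or.inr rfl)
          exact mem_NS.2 (Or.inr ⟨none, hn, hadj⟩)
      have hcard : (NS G S ∪ {u', v'}).ncard + 1 ≤ (NS G' T).ncard :=
        ncard_succ_le _ _ hincl (mem_NS.2 (Or.inl hn))
      suffices hA : (∑ x ∈ S, e x) + 1 < (NS G S ∪ {u', v'}).ncard by omega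
      by_cases hSne : S.Nonempty
      · by_cases hu : u' ∈ S
        · -- u' ∈ S : union is NS G S
          have hvin : v' ∈ NS G S :=
            mem_NS.2 (Or.inr ⟨u', hu, madj_inl_inl.2 huv⟩)
          have hunion : NS G S ∪ {u', v'} = NS G S := by
            apply Set.union_eq_self_of_subset_right
            rintro x (rfl | rfl)
            · exact mem_NS.2 (Or.inl hu)
            · exact hvin
          rw [hunion]
          have h1 := heS S
          rw [if_pos hu] at h1
          have := hsub S hSne
          omega
        · by_cases hv : v' ∈ S
          · -- v' ∈ S
            have huin : u' ∈ NS G S :=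
              mem_NS.2 (Or.inr ⟨v', hv, madj_inl_inl.2 huv.symm⟩)
            have hunion : NS G S ∪ {u', v'} = NS G S := by
              apply Set.union_eq_self_of_subset_right
              rintro x (rfl | rfl)
              · exact huin
              · exact mem_NS.2 (Or.inl hv)
            rw [hunion]
            have h1 := heS' S
            rw [if_pos hv] at h1
            have := hsub' S hSne
            omega
          · by_cases hinl : ∃ a : Fin N, Sum.inl a ∈ S
            · -- some original vertex in S
              obtain ⟨a, ha⟩ := hinl
              have hNu : ∀ x, G.Adj u' x → x ∈ NS G S := by
                rintro (b | j) hadj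
                · exact inl_mem_NS ha b
                · rcases madj_inr.1 hadj.symm with h | h
                  · exact absurd (Sum.inl_injective h) (hdisj j).1
                  · exact absurd (Sum.inl_injective h) (hdisj j).2.1
              have hkey : NS G (insert u' S) ⊆ NS G S ∪ {u', v'} := by
                intro x hx
                rcases mem_NS.1 hx with hx | ⟨i, hi, hadj⟩
                · rcases Finset.mem_insert.1 hx with rfl | hx
                  · exact Or.inr (Or.inl rfl)
                  · exact Or.inl (mem_NS.2 (Or.inl hx))
                · rcases Finset.mem_insert.1 hi with rfl | hi
                  · exact Or.inl (hNu x hadj)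
                  · exact Or.inl (mem_NS.2 (Or.inr ⟨i, hi, hadj⟩))
              have hcard2 : (NS G (insert u' S)).ncard ≤ (NS G S ∪ {u', v'}).ncard :=
                Set.ncard_le_ncard hkey (Set.toFinite _)
              have hdr := hsub (insert u' S) ⟨u', Finset.mem_insert_self _ _⟩
              rw [Finset.sum_insert hu] at hdr
              have hsle : ∑ x ∈ S, e x ≤ ∑ x ∈ S, c x := Finset.sum_le_sum fun x _ => hele x
              have hcu1 : 1 ≤ c u' := by omega
              omega
            · -- S consists only of matching vertices
              push_neg at hinl
              have hunotin : u' ∉ NS G S := by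
                intro h
                rcases mem_NS.1 h with h | ⟨i, hi, hadj⟩
                · exact hinl u h
                · rcases i with b | j
                  · exact hinl b hi
                  · rcases madj_inr.1 hadj with h | h <;>
                    · injection h with h'
                      first
                      | exact (hdisj j).1 h'
                      | exact (hdisj j).2.1 h'
              have hvnotin : v' ∉ NS G S := by
                intro h
                rcases mem_NS.1 h with h | ⟨i, hi, hadj⟩
                · exact hinl v h
                · rcases i with b | j
                  · exact hinl b hi
                  · rcases madj_inr.1 hadj with h | h <;>
                    · injection h with h'
                      first
                      | exact (hdisj j).2.2.1 h'
                      | exact (hdisj j).2.2.2 h'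
              have hunion : NS G S ∪ {u', v'} = insert u' (insert v' (NS G S)) := by
                ext x
                simp only [Set.mem_union, Set.mem_insert_iff, Set.mem_singleton_iff]
                tauto
              have hcardu : (NS G S ∪ {u', v'}).ncard = (NS G S).ncard + 2 := by
                rw [hunion, Set.ncard_insert_of_notMem (by
                    simp only [Set.mem_insert_iff]
                    push_neg
                    exact ⟨huv', hunotin⟩) (Set.toFinite _),
                  Set.ncard_insert_of_notMem hvnotin (Set.toFinite _)]
              have := hsub S hSne
              have hsle : ∑ x ∈ S, e x ≤ ∑ x ∈ S, c x := Finset.sum_le_sum fun x _ => hele x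
              omega
      · -- S empty
        have hS0 : S = ∅ := Finset.not_nonempty_iff_eq_empty.1 hSne
        rw [hS0]
        have hNS0 : NS G (∅ : Finset (Fin N ⊕ Fin M)) = ∅ := by
          simp [NS]
        rw [hNS0, Set.empty_union, Finset.sum_empty]
        rw [Set.ncard_pair huv']
        omega
    · -- none ∉ T
      rw [if_neg hn, zero_add]
      have hSne : S.Nonempty := by
        obtain ⟨o, ho⟩ := hT
        cases o with
        | none => exact absurd ho hn
        | some x => exact ⟨x, Finset.mem_eraseNone.2 ho⟩
      have hsle : ∑ x ∈ S, e x ≤ ∑ x ∈ S, c x := Finset.sum_le_sum fun x _ => hele x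
      have h1 := hsub S hSne
      calc ∑ x ∈ S, e x ≤ ∑ x ∈ S, c x := hsle
        _ < (NS G S).ncard := h1
        _ = (some '' NS G S).ncard :=
          (Set.ncard_image_of_injective _ (Option.some_injective _)).symm
        _ ≤ (NS G' T).ncard :=
          Set.ncard_le_ncard (NS_image_subset G u' v' T) (Set.toFinite _)

lemma mem_beta_pos {W : Type*} [Fintype W] [DecidableEq W] {G : SimpleGraph W} {u v : W}
    (huv : u ≠ v) {c : W → ℕ}
    (h : betaMap v c ∈ betaMap u '' {c' | DraconianD G c'}) : 1 ≤ c u := by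
  obtain ⟨c'', -, hrel⟩ := h
  have := congrFun hrel (some u)
  simp [betaMap, huv] at this
  omega

/-- Lemma 2.6 (new triangle lemma): with `G = K_N △ 𝓜` and `e = uv` an edge of `K_N`
disjoint from the matching `𝓜`, every `D(G)`-draconian sequence `c` yields the
`D(G')`-draconian sequence `γ(c)`, where `G' = K_N △ (𝓜 ∪ {e})` has new vertex `w = none`;
moreover `γ` is injective on the set of `D(G)`-draconian sequences. -/
theorem stmt5 (N M : ℕ) (hN : 2 ≤ N) (f g : Fin M → Fin N)
    (hmatch : Function.Injective (Sum.elim f g : Fin M ⊕ Fin M → Fin N))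
    (u v : Fin N) (huv : u ≠ v)
    (hdisj : ∀ i : Fin M, u ≠ f i ∧ u ≠ g i ∧ v ≠ f i ∧ v ≠ g i) :
    (∀ c : Fin N ⊕ Fin M → ℕ, DraconianD (MatchTri N M f g) c →
        DraconianD (triExt (MatchTri N M f g) (Sum.inl u) (Sum.inl v))
          (gammaMap (MatchTri N M f g) (Sum.inl u) (Sum.inl v) c)) ∧
      Set.InjOn (gammaMap (MatchTri N M f g) (Sum.inl u) (Sum.inl v))
        {c | DraconianD (MatchTri N M f g) c} := by
  set G := MatchTri N M f g with hG
  set u' : Fin N ⊕ Fin M := Sum.inl u with hu'def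
  set v' : Fin N ⊕ Fin M := Sum.inl v with hv'def
  have huv' : u' ≠ v' := fun h => huv (Sum.inl_injective h)
  constructor
  · intro c hc
    by_cases hmem : betaMap v' c ∈ betaMap u' '' {c' | DraconianD G c'}
    · rw [gammaMap, if_pos hmem]
      obtain ⟨c'', hc'', hrel⟩ := hmem
      exact lemB N M hN f g u v huv hdisj c c'' hc hc'' hrel.symm
    · rw [gammaMap, if_neg hmem]
      exact lemA G u' v' c hc
  · intro c1 h1 c2 h2 heq
    rw [gammaMap, gammaMap] at heq
    by_cases m1 : betaMap v' c1 ∈ betaMap u' '' {c' | DraconianD G c'} <;>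
      by_cases m2 : betaMap v' c2 ∈ betaMap u' '' {c' | DraconianD G c'}
    · rw [if_pos m1, if_pos m2] at heq
      have hc1 := mem_beta_pos huv' m1
      have hc2 := mem_beta_pos huv' m2
      funext x
      have hx := congrFun heq (some x)
      simp only [Option.elim] at hx
      by_cases h : x = u'
      · subst h
        rw [if_pos rfl] at hx
        omega
      · rw [if_neg h] at hx
        omega
    · rw [if_pos m1, if_neg m2] at heq
      have := congrFun heq none
      simp only [Option.elim, betaMap] at this
      omega
    · rw [if_neg m1, if_pos m2] at heq
      have := congrFun heq none
      simp only [Option.elim, betaMap] at this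
      omega
    · rw [if_neg m1, if_neg m2] at heq
      funext x
      have hx := congrFun heq (some x)
      simp only [betaMap, Option.elim] at hx
      omega
end

section
/- Let N >= 2, let M be a matching of K_N, let e = uv be an edge of K_N with M ∪ {e} also a matching, let G = K_N△M and G' = K_N△(M ∪ {e}) with new vertex w. If d is a D(G')-draconian sequence with d_w = 2, then both of the sequences obtained from d by deleting coordinate w and adding 1 to d_u, respectively adding 1 to d_v, are D(G)-draconian sequences. -/
/-!
The new vertex `w` of `G' = G △ uv` has the closed neighbourhood `{w, u, v}`. For a nonempty
`S ⊆ V(G)` missing `u` and `v`, the closed neighbourhood of `S` in `G'` is that in `G`, so the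
draconian inequality for `S` transfers unchanged. If `S` meets `{u, v}` then, as `u ~ v`, the
closed neighbourhood of `S ∪ {w}` in `G'` is that of `S` in `G` plus `w`; the inequality for
`S ∪ {w}` in `G'` carries the extra `d w = 2` on the left and only one extra vertex on the right,
which leaves room for the `+ 1` at `u` or `v`.
-/

namespace SimpleGraph

variable {V : Type*}

/-- The neighbourhood of `S` in the bipartite double `D(H)`, read on `V`. -/
def closedNbhd (H : SimpleGraph V) (S : Set V) : Set V :=
  S ∪ ⋃ i ∈ S, H.neighborSet i

lemma mem_closedNbhd {H : SimpleGraph V} {S : Set V} {y : V} :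
    y ∈ H.closedNbhd S ↔ y ∈ S ∨ ∃ x ∈ S, H.Adj x y := by
  simp [closedNbhd]

lemma closedNbhd_insert (H : SimpleGraph V) (x : V) (S : Set V) :
    H.closedNbhd (insert x S) = insert x (H.closedNbhd S ∪ H.neighborSet x) := by
  ext y
  simp only [mem_closedNbhd, Set.mem_insert_iff, Set.mem_union, mem_neighborSet,
    exists_eq_or_imp]
  aesop

lemma triExt_adj_some (G : SimpleGraph V) (u v x y : V) :
    (triExt G u v).Adj (some x) (some y) ↔ G.Adj x y := by
  rw [triExt, fromRel_adj]
  constructor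
  · rintro ⟨-, (⟨x', y', ⟨⟩, ⟨⟩, h⟩ | ⟨⟨⟩, -⟩) | (⟨x', y', ⟨⟩, ⟨⟩, h⟩ | ⟨⟨⟩, -⟩)⟩
    exacts [h, h.symm]
  · exact fun h => ⟨by simpa using h.ne, Or.inl (Or.inl ⟨x, y, rfl, rfl, h⟩)⟩

lemma triExt_adj_none (G : SimpleGraph V) (u v : V) (b : Option V) :
    (triExt G u v).Adj none b ↔ b = some u ∨ b = some v := by
  rw [triExt, fromRel_adj]
  constructor
  · rintro ⟨-, (⟨x', y', ⟨⟩, -, -⟩ | ⟨-, h⟩) | (⟨x', y', -, ⟨⟩, -⟩ | ⟨-, h⟩)⟩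
    · exact h
    · simp at h
  · rintro (rfl | rfl) <;> simp

lemma closedNbhd_triExt_image_some (G : SimpleGraph V) (u v : V) (S : Set V) :
    (triExt G u v).closedNbhd (some '' S) =
      some '' G.closedNbhd S ∪ {b | b = none ∧ (u ∈ S ∨ v ∈ S)} := by
  ext (_ | y)
  · simp [mem_closedNbhd, adj_comm _ _ none, triExt_adj_none, and_or_left, exists_or]
  · simp [mem_closedNbhd, triExt_adj_some]

lemma closedNbhd_triExt_insert_none {G : SimpleGraph V} {u v : V} (huv : G.Adj u v)
    {S : Set V} (hS : u ∈ S ∨ v ∈ S) :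
    (triExt G u v).closedNbhd (insert none (some '' S)) = insert none (some '' G.closedNbhd S) := by
  have hu : u ∈ G.closedNbhd S := mem_closedNbhd.2 (hS.imp_right fun hv => ⟨v, hv, huv.symm⟩)
  have hv : v ∈ G.closedNbhd S := mem_closedNbhd.2 (hS.symm.imp_right fun hu => ⟨u, hu, huv⟩)
  ext (_ | y)
  · simp [closedNbhd_insert]
  · simp only [closedNbhd_insert, closedNbhd_triExt_image_some, Set.mem_insert_iff,
      Set.mem_union, mem_neighborSet, triExt_adj_none, Set.mem_image, Set.mem_ofPred_eq,
      Option.some_inj, reduceCtorEq, false_or, false_and, or_false]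
    constructor
    · rintro (h | rfl | rfl) <;> first | exact h | exact ⟨_, ‹_›, rfl⟩
    · exact Or.inl

end SimpleGraph

open SimpleGraph

lemma DraconianD.of_triExt {V : Type*} [Fintype V] [DecidableEq V] {G : SimpleGraph V}
    {u v a : V} (huv : G.Adj u v) (ha : a = u ∨ a = v) {d : Option V → ℕ}
    (hd : DraconianD (triExt G u v) d) (h2 : d none = 2) :
    DraconianD G (fun x => d (some x) + if x = a then 1 else 0) := by
  obtain ⟨hsum, hnbhd⟩ := hd
  constructor
  · rw [Fintype.sum_option, Fintype.card_option, h2] at hsum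
    rw [Finset.sum_add_distrib, Finset.sum_ite_eq' Finset.univ a fun _ => 1, if_pos
      (Finset.mem_univ a)]
    omega
  · intro S hS
    change _ < (G.closedNbhd S).ncard
    rw [Finset.sum_add_distrib, Finset.sum_ite_eq' S a fun _ => 1]
    by_cases huvS : u ∈ S ∨ v ∈ S
    · have h := hnbhd (insert none (S.image some)) (Finset.insert_nonempty _ _)
      change _ < ((triExt G u v).closedNbhd _).ncard at h
      rw [Finset.sum_insert (by simp), Finset.sum_image (by simp), h2, Finset.coe_insert,
        Finset.coe_image, closedNbhd_triExt_insert_none huv huvS,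
        Set.ncard_insert_of_notMem (by simp),
        Set.ncard_image_of_injective _ (Option.some_injective V)] at h
      split_ifs <;> omega
    · have haS : a ∉ S := by rcases ha with rfl | rfl <;> tauto
      have h := hnbhd (S.image some) (hS.image some)
      change _ < ((triExt G u v).closedNbhd _).ncard at h
      rw [Finset.sum_image (by simp), Finset.coe_image, closedNbhd_triExt_image_some] at h
      simp only [Finset.mem_coe, huvS, and_false, Set.ofPred_false, Set.union_empty,
        Set.ncard_image_of_injective _ (Option.some_injective V)] at h
      rw [if_neg haS]
      omega

lemma matchTri_adj_inl (N M : ℕ) (f g : Fin M → Fin N) (x y : Fin N) :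
    (MatchTri N M f g).Adj (Sum.inl x) (Sum.inl y) ↔ x ≠ y := by
  rw [MatchTri, fromRel_adj]
  constructor
  · rintro ⟨hne, -⟩
    simpa using hne
  · exact fun h => ⟨by simpa using h, Or.inl (Or.inl ⟨x, y, rfl, rfl, h⟩)⟩

theorem stmt9_general (N M : ℕ) (f g : Fin M → Fin N)
    (u v : Fin N) (huv : u ≠ v)
    (d : Option (Fin N ⊕ Fin M) → ℕ)
    (hd : DraconianD (triExt (MatchTri N M f g) (Sum.inl u) (Sum.inl v)) d)
    (h2 : d none = 2) :
    DraconianD (MatchTri N M f g)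
        (fun x => d (some x) + if x = Sum.inl u then 1 else 0) ∧
      DraconianD (MatchTri N M f g)
        (fun x => d (some x) + if x = Sum.inl v then 1 else 0) := by
  have hadj : (MatchTri N M f g).Adj (Sum.inl u) (Sum.inl v) :=
    (matchTri_adj_inl N M f g u v).2 huv
  exact ⟨hd.of_triExt hadj (Or.inl rfl) h2, hd.of_triExt hadj (Or.inr rfl) h2⟩

/-- With `G = K_N △ 𝓜`, `e = uv` disjoint from the matching, and
`G' = K_N △ (𝓜 ∪ {e})` (new vertex `w = none`): if `d` is a `D(G')`-draconian sequence
with `d w = 2`, then deleting coordinate `w` and adding `1` to the `u`-entry, respectively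
to the `v`-entry, both yield `D(G)`-draconian sequences. -/
theorem stmt9 (N M : ℕ) (hN : 2 ≤ N) (f g : Fin M → Fin N)
    (hmatch : Function.Injective (Sum.elim f g : Fin M ⊕ Fin M → Fin N))
    (u v : Fin N) (huv : u ≠ v)
    (hdisj : ∀ i : Fin M, u ≠ f i ∧ u ≠ g i ∧ v ≠ f i ∧ v ≠ g i)
    (d : Option (Fin N ⊕ Fin M) → ℕ)
    (hd : DraconianD (triExt (MatchTri N M f g) (Sum.inl u) (Sum.inl v)) d)
    (h2 : d none = 2) :
    DraconianD (MatchTri N M f g)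
        (fun x => d (some x) + if x = Sum.inl u then 1 else 0) ∧
      DraconianD (MatchTri N M f g)
        (fun x => d (some x) + if x = Sum.inl v then 1 else 0) :=
  stmt9_general N M f g u v huv d hd h2
end

section
/- Let N >= 5 and 3 <= M <= N with M ≠ 4. Let C be an M-cycle in K_N with vertices v_0,...,v_{M−1} (v_i adjacent to v_{i±1 mod M}), and let G = K_N minus the edges of C. Then the set of D(K_N)-draconian sequences that fail to be D(G)-draconian equals the disjoint union X ⊎ Y, where X = { (N−2)e_{v_i} + e_j : 0 <= i <= M−1, j ∈ [N] } and Y = { r·e_{v_i} + (N−1−r)·e_{v_{i+2 mod M}} : 0 <= i <= M−1, 2 <= r <= N−3 }. -/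
/-- `K_N` minus the edges of the `M`-cycle with vertices `v 0, …, v (M-1)` (cyclically
adjacent). -/
def cycleRemoved (N M : ℕ) [NeZero M] (v : Fin M → Fin N) : SimpleGraph (Fin N) :=
  (⊤ : SimpleGraph (Fin N)) \
    SimpleGraph.fromRel fun a b => ∃ i : Fin M, a = v i ∧ b = v (i + 1)

/-- `𝒳(C_M) = {(N-2)·e_{v i} + e_j : i ∈ Fin M, j ∈ [N]}`. -/
def setX (N M : ℕ) (v : Fin M → Fin N) : Set (Fin N → ℕ) :=
  {c | ∃ (i : Fin M) (j : Fin N),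
    c = fun x => (if x = v i then N - 2 else 0) + (if x = j then 1 else 0)}

/-- `𝒴(C_M) = {r·e_{v i} + (N-1-r)·e_{v (i+2)} : i ∈ Fin M, 2 ≤ r ≤ N-3}`. -/
def setY (N M : ℕ) [NeZero M] (v : Fin M → Fin N) : Set (Fin N → ℕ) :=
  {c | ∃ (i : Fin M) (r : ℕ), 2 ≤ r ∧ r ≤ N - 3 ∧
    c = fun x => (if x = v i then r else 0) + (if x = v (i + 2) then N - 1 - r else 0)}

/-- `𝒵(C_M) = {r·e_{v i} + (N-2-r)·e_{v (i+2)} + e_s : i ∈ Fin M, 1 ≤ r ≤ N-3,`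
`s ∉ {v i, v (i+2)}}`. -/
def setZ (N M : ℕ) [NeZero M] (v : Fin M → Fin N) : Set (Fin N → ℕ) :=
  {c | ∃ (i : Fin M) (r : ℕ) (s : Fin N), 1 ≤ r ∧ r ≤ N - 3 ∧ s ≠ v i ∧ s ≠ v (i + 2) ∧
    c = fun x => (if x = v i then r else 0) +
      (if x = v (i + 2) then N - 2 - r else 0) + (if x = s then 1 else 0)}

section
variable {N M : ℕ} [NeZero M] {v : Fin M → Fin N}
open scoped Fin.NatCast Fin.CommRing

lemma cycleRemoved_adj (a b : Fin N) :
    (cycleRemoved N M v).Adj a b ↔ a ≠ b ∧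
      (∀ i : Fin M, ¬(a = v i ∧ b = v (i+1))) ∧ (∀ i : Fin M, ¬(b = v i ∧ a = v (i+1))) := by
  simp [cycleRemoved, SimpleGraph.fromRel_adj]; tauto

lemma notMem_U (S : Finset (Fin N)) (x : Fin N) :
    x ∉ ((S : Set (Fin N)) ∪ ⋃ i ∈ S, (cycleRemoved N M v).neighborSet i) ↔
      x ∉ S ∧ ∀ i ∈ S, (∃ k, i = v k ∧ x = v (k+1)) ∨ (∃ k, x = v k ∧ i = v (k+1)) := by
  constructor
  · intro h
    rw [Set.mem_union] at h
    push_neg at h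
    obtain ⟨hxS, hU⟩ := h
    have hxS' : x ∉ S := by simpa using hxS
    refine ⟨hxS', fun i hi => ?_⟩
    have hadj : ¬ (cycleRemoved N M v).Adj i x := by
      intro ha
      exact hU (Set.mem_iUnion₂.mpr ⟨i, hi, ha⟩)
    rw [cycleRemoved_adj] at hadj
    push_neg at hadj
    have hne : i ≠ x := fun he => hxS' (he ▸ hi)
    by_cases hP : ∀ k, i = v k → x ≠ v (k+1)
    · right; exact hadj hne hP
    · left; push_neg at hP
      obtain ⟨k, hk1, hk2⟩ := hP
      exact ⟨k, hk1, hk2⟩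
  · rintro ⟨hxS, h⟩ hx
    rcases Set.mem_union _ _ _ |>.mp hx with hx | hx
    · exact hxS (by simpa using hx)
    · obtain ⟨i, hi, hadj⟩ := Set.mem_iUnion₂.mp hx
      rw [SimpleGraph.mem_neighborSet, cycleRemoved_adj] at hadj
      obtain ⟨_, hPa, hQa⟩ := hadj
      rcases h i hi with ⟨k, hk⟩ | ⟨k, hk⟩
      · exact hPa k hk
      · exact hQa k hk

lemma fin_cast_ne {k : ℕ} (h1 : 0 < k % M) : (k : Fin M) ≠ 0 := by
  simpa [Fin.ext_iff, Fin.val_natCast] using h1.ne'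

lemma fin_shift {d : Fin M} (hd : d ≠ 0) (a : Fin M) : a ≠ a + d := by
  intro h; apply hd; nth_rewrite 1 [← add_zero a] at h; exact (add_left_cancel h).symm

lemma fin1 (hM3 : 3 ≤ M) : (1 : Fin M) ≠ 0 := by
  have : ((1:ℕ) : Fin M) ≠ 0 := fin_cast_ne (by rw [Nat.mod_eq_of_lt (by omega)]; omega)
  simpa using this

lemma fin2 (hM3 : 3 ≤ M) : (2 : Fin M) ≠ 0 := by
  have : ((2:ℕ) : Fin M) ≠ 0 := fin_cast_ne (by rw [Nat.mod_eq_of_lt (by omega)]; omega)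
  simpa using this

lemma fin4 (hM3 : 3 ≤ M) (hM4 : M ≠ 4) : (4 : Fin M) ≠ 0 := by
  have : ((4:ℕ) : Fin M) ≠ 0 := fin_cast_ne (by
    rcases eq_or_ne M 3 with rfl | h
    · norm_num
    · rw [Nat.mod_eq_of_lt (by omega)]; omega)
  simpa using this

variable (v) in
lemma compl_singleton (hM3 : 3 ≤ M) (hv : Function.Injective v) (i : Fin M) :
    ((({v i} : Finset (Fin N)) : Set (Fin N)) ∪
        ⋃ j ∈ ({v i} : Finset (Fin N)), (cycleRemoved N M v).neighborSet j)ᶜ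
      = {v (i+1), v (i-1)} := by
  ext x
  rw [Set.mem_compl_iff, notMem_U]
  simp only [Finset.mem_singleton, Set.mem_insert_iff, Set.mem_singleton_iff]
  constructor
  · rintro ⟨hx, h⟩
    rcases h (v i) rfl with ⟨k, hk1, hk2⟩ | ⟨k, hk1, hk2⟩
    · left; rw [hk2, hv hk1]
    · right; rw [hk1]; congr 1
      have : i = k + 1 := hv hk2
      rw [this]; ring
  · rintro (rfl | rfl)
    · refine ⟨fun h => fin_shift (fin1 hM3) i (hv h).symm, fun j hj => ?_⟩
      subst hj; exact Or.inl ⟨i, rfl, rfl⟩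
    · refine ⟨fun h => ?_, fun j hj => ?_⟩
      · have : i - 1 = i := hv h
        exact fin1 hM3 (sub_eq_self.mp this)
      · subst hj; exact Or.inr ⟨i - 1, rfl, by congr 1; ring⟩

variable (v) in
lemma ncard_U_singleton (hM3 : 3 ≤ M) (hv : Function.Injective v) (i : Fin M) :
    ((({v i} : Finset (Fin N)) : Set (Fin N)) ∪
        ⋃ j ∈ ({v i} : Finset (Fin N)), (cycleRemoved N M v).neighborSet j).ncard
      = N - 2 := by
  have hne : v (i+1) ≠ v (i-1) := by
    intro h
    have h2 : i + 1 = i - 1 := hv h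
    rw [show i + 1 = (i - 1) + 2 by ring] at h2
    exact fin2 hM3 (left_eq_add.mp h2.symm)
  have hc := compl_singleton v hM3 hv i
  have := Set.ncard_add_ncard_compl
    ((({v i} : Finset (Fin N)) : Set (Fin N)) ∪
      ⋃ j ∈ ({v i} : Finset (Fin N)), (cycleRemoved N M v).neighborSet j)
  rw [hc, Set.ncard_pair hne, Nat.card_eq_fintype_card, Fintype.card_fin] at this
  omega

variable (v) in
lemma compl_pair (hM3 : 3 ≤ M) (hM4 : M ≠ 4) (hv : Function.Injective v) (i : Fin M) :
    ((({v i, v (i+2)} : Finset (Fin N)) : Set (Fin N)) ∪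
        ⋃ j ∈ ({v i, v (i+2)} : Finset (Fin N)), (cycleRemoved N M v).neighborSet j)ᶜ
      = {v (i+1)} := by
  ext x
  rw [Set.mem_compl_iff, notMem_U]
  simp only [Finset.mem_insert, Finset.mem_singleton, Set.mem_singleton_iff]
  constructor
  · rintro ⟨hx, h⟩
    have h1 := h (v i) (Or.inl rfl)
    have h2 := h (v (i+2)) (Or.inr rfl)
    have e1 : x = v (i+1) ∨ x = v (i-1) := by
      rcases h1 with ⟨k, hk1, hk2⟩ | ⟨k, hk1, hk2⟩
      · left; rw [hk2, hv hk1]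
      · right; rw [hk1]; congr 1; rw [hv hk2]; ring
    have e2 : x = v (i+3) ∨ x = v (i+1) := by
      rcases h2 with ⟨k, hk1, hk2⟩ | ⟨k, hk1, hk2⟩
      · left; rw [hk2]; congr 1; rw [← hv hk1]; ring
      · right; rw [hk1]; congr 1
        have : i + 2 = k + 1 := hv hk2
        have : k = i + 1 := by rw [show i + 2 = (i+1)+1 by ring] at this; exact (add_left_injective 1 this).symm
        rw [this]
    rcases e1 with rfl | rfl
    · rfl
    · rcases e2 with h3 | h3
      · exfalso
        have h4 : i - 1 = i + 3 := hv h3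
        rw [show i + 3 = (i-1) + 4 by ring] at h4
        exact fin4 hM3 hM4 (left_eq_add.mp h4)
      · exact h3
  · rintro rfl
    refine ⟨?_, fun j hj => ?_⟩
    · rintro (h | h)
      · exact fin_shift (fin1 hM3) i (hv h).symm
      · have h5 : i + 1 = i + 2 := hv h
        have h6 : (1 : Fin M) = 2 := add_left_cancel h5
        rw [show (2:Fin M) = 1 + 1 by norm_num] at h6
        nth_rewrite 1 [← add_zero (1 : Fin M)] at h6
        exact fin1 hM3 (add_left_cancel h6).symm
    · rcases hj with rfl | rfl
      · exact Or.inl ⟨i, rfl, rfl⟩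
      · exact Or.inr ⟨i + 1, rfl, by congr 1; ring⟩

variable (v) in
lemma ncard_U_pair (hM3 : 3 ≤ M) (hM4 : M ≠ 4) (hv : Function.Injective v) (i : Fin M) :
    ((({v i, v (i+2)} : Finset (Fin N)) : Set (Fin N)) ∪
        ⋃ j ∈ ({v i, v (i+2)} : Finset (Fin N)), (cycleRemoved N M v).neighborSet j).ncard
      = N - 1 := by
  have hc := compl_pair v hM3 hM4 hv i
  have := Set.ncard_add_ncard_compl
    ((({v i, v (i+2)} : Finset (Fin N)) : Set (Fin N)) ∪
      ⋃ j ∈ ({v i, v (i+2)} : Finset (Fin N)), (cycleRemoved N M v).neighborSet j)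
  rw [hc, Set.ncard_singleton, Nat.card_eq_fintype_card, Fintype.card_fin] at this
  have hN1 : 1 ≤ N := (v i).pos
  omega

lemma dracTop_iff (hN : 1 ≤ N) (c : Fin N → ℕ) :
    DraconianD (⊤ : SimpleGraph (Fin N)) c ↔ ∑ x, c x = N - 1 := by
  constructor
  · intro h; simpa using h.1
  · intro h
    refine ⟨by simpa using h, fun S hS => ?_⟩
    have hU : ((S : Set (Fin N)) ∪ ⋃ i ∈ S, (⊤ : SimpleGraph (Fin N)).neighborSet i)
        = Set.univ := by
      obtain ⟨i₀, hi₀⟩ := hS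
      ext x
      simp only [Set.mem_univ, iff_true, Set.mem_union]
      by_cases hx : x = i₀
      · exact Or.inl (by simpa [hx] using hi₀)
      · exact Or.inr (Set.mem_iUnion₂.mpr ⟨i₀, hi₀, by simp [SimpleGraph.mem_neighborSet]; exact fun he => hx he⟩)
    rw [hU, Set.ncard_univ, Nat.card_eq_fintype_card, Fintype.card_fin]
    have hle : ∑ i ∈ S, c i ≤ ∑ x, c x :=
      Finset.sum_le_sum_of_subset (Finset.subset_univ S)
    omega

lemma sum_eq_one_struct {s : Finset (Fin N)} {f : Fin N → ℕ} (h : ∑ x ∈ s, f x = 1) :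
    ∃ a ∈ s, f a = 1 ∧ ∀ b ∈ s, b ≠ a → f b = 0 := by
  have hex : ∃ a ∈ s, f a ≠ 0 := by
    by_contra hc
    push_neg at hc
    rw [Finset.sum_eq_zero hc] at h
    omega
  obtain ⟨a, ha, hfa⟩ := hex
  have h1 : f a ≤ 1 := h ▸ Finset.single_le_sum (fun i _ => Nat.zero_le (f i)) ha
  have h2 : f a = 1 := by omega
  refine ⟨a, ha, h2, fun b hb hba => ?_⟩
  have h3 : ∑ x ∈ s.erase a, f x + f a = ∑ x ∈ s, f x := Finset.sum_erase_add s f ha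
  have h4 : ∑ x ∈ s.erase a, f x = 0 := by omega
  exact (Finset.sum_eq_zero_iff.mp h4) b (Finset.mem_erase.mpr ⟨hba, hb⟩)

lemma singleton_case (hN : 5 ≤ N) {c : Fin N → ℕ} (hsum : ∑ x, c x = N - 1)
    (j : Fin M) (hc : N - 2 ≤ c (v j)) : c ∈ setX N M v := by
  have h1 : c (v j) ≤ N - 1 :=
    hsum ▸ Finset.single_le_sum (fun i _ => Nat.zero_le (c i)) (Finset.mem_univ _)
  have hrest : ∑ x ∈ Finset.univ.erase (v j), c x + c (v j) = N - 1 := by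
    rw [Finset.sum_erase_add _ _ (Finset.mem_univ _)]; exact hsum
  rcases (by omega : c (v j) = N - 1 ∨ c (v j) = N - 2) with h | h
  · refine ⟨j, v j, funext fun x => ?_⟩
    by_cases hx : x = v j
    · subst hx; simp; omega
    · have hx0 : c x = 0 := Finset.sum_eq_zero_iff.mp (by omega) x
        (Finset.mem_erase.mpr ⟨hx, Finset.mem_univ _⟩)
    
      simp [hx, hx0]
  · have h2 : ∑ x ∈ Finset.univ.erase (v j), c x = 1 := by omega
    obtain ⟨a, ha, ha1, ha0⟩ := sum_eq_one_struct h2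
    have hav : a ≠ v j := (Finset.mem_erase.mp ha).1
    refine ⟨j, a, funext fun x => ?_⟩
    by_cases hx : x = v j
    · subst hx; simp [Ne.symm hav]; omega
    · by_cases hxa : x = a
      · subst hxa; simp [hav, ha1]
      · have hx0 := ha0 x (Finset.mem_erase.mpr ⟨hx, Finset.mem_univ _⟩) hxa
        simp [hx, hxa, hx0]

lemma pair_case (hN : 5 ≤ N) (hM3 : 3 ≤ M) (hv : Function.Injective v) {c : Fin N → ℕ}
    (hsum : ∑ x, c x = N - 1) (i : Fin M)
    (hc : N - 1 ≤ c (v i) + c (v (i+2))) : c ∈ setX N M v ∪ setY N M v := by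
  have hvne : v i ≠ v (i+2) := fun h => fin_shift (fin2 hM3) i (hv h)
  have hpair : ∑ x ∈ ({v i, v (i+2)} : Finset (Fin N)), c x = c (v i) + c (v (i+2)) :=
    Finset.sum_pair hvne
  have hle : ∑ x ∈ ({v i, v (i+2)} : Finset (Fin N)), c x ≤ N - 1 :=
    hsum ▸ Finset.sum_le_sum_of_subset (Finset.subset_univ _)
  have hco : ∑ x ∈ ({v i, v (i+2)} : Finset (Fin N))ᶜ, c x = 0 := by
    have := Finset.sum_add_sum_compl ({v i, v (i+2)} : Finset (Fin N)) c
    omega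
  have hzero : ∀ x, x ≠ v i → x ≠ v (i+2) → c x = 0 := fun x hx1 hx2 =>
    Finset.sum_eq_zero_iff.mp hco x (by simp [hx1, hx2])
  have hsum2 : c (v i) + c (v (i+2)) = N - 1 := by omega
  by_cases h2r : 2 ≤ c (v i) ∧ c (v i) ≤ N - 3
  · refine Or.inr ⟨i, c (v i), h2r.1, h2r.2, funext fun x => ?_⟩
    by_cases hx1 : x = v i
    · subst hx1; simp [hvne]
    · by_cases hx2 : x = v (i+2)
      · subst hx2; simp [Ne.symm hvne]; omega
      · simp [hx1, hx2, hzero x hx1 hx2]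
  · left
    rcases (by omega : c (v i) = 0 ∨ c (v i) = 1 ∨ c (v i) = N - 2 ∨ c (v i) = N - 1)
      with h0 | h0 | h0 | h0
    · refine ⟨i + 2, v (i+2), funext fun x => ?_⟩
      by_cases hx2 : x = v (i+2)
      · subst hx2; simp; omega
      · by_cases hx1 : x = v i
        · subst hx1; simp [hvne]; omega
        · simp [hx1, hx2, hzero x hx1 hx2]
    · refine ⟨i + 2, v i, funext fun x => ?_⟩
      by_cases hx2 : x = v (i+2)
      · subst hx2; simp [Ne.symm hvne]; omega
      · by_cases hx1 : x = v i
        · subst hx1; simp [hvne]; omega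
        · simp [hx1, hx2, hzero x hx1 hx2]
    · refine ⟨i, v (i+2), funext fun x => ?_⟩
      by_cases hx1 : x = v i
      · subst hx1; simp [hvne]; omega
      · by_cases hx2 : x = v (i+2)
        · subst hx2; simp [Ne.symm hvne]; omega
        · simp [hx1, hx2, hzero x hx1 hx2]
    · refine ⟨i, v i, funext fun x => ?_⟩
      by_cases hx1 : x = v i
      · subst hx1; simp; omega
      · by_cases hx2 : x = v (i+2)
        · subst hx2; simp [Ne.symm hvne]; omega
        · simp [hx1, hx2, hzero x hx1 hx2]

lemma forward_case (hN : 5 ≤ N) (hM3 : 3 ≤ M) (hM4 : M ≠ 4) (hv : Function.Injective v)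
    {c : Fin N → ℕ} (hsum : ∑ x, c x = N - 1) (S : Finset (Fin N)) (hS : S.Nonempty)
    (hfail : ((S : Set (Fin N)) ∪ ⋃ i ∈ S, (cycleRemoved N M v).neighborSet i).ncard
      ≤ ∑ i ∈ S, c i) :
    c ∈ setX N M v ∪ setY N M v := by
  have hSle : ∑ i ∈ S, c i ≤ N - 1 :=
    hsum ▸ Finset.sum_le_sum_of_subset (Finset.subset_univ S)
  have hcompl : ((S : Set (Fin N)) ∪ ⋃ i ∈ S, (cycleRemoved N M v).neighborSet i)ᶜ.Nonempty := by
    rw [Set.nonempty_iff_ne_empty]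
    intro he
    have hu : ((S : Set (Fin N)) ∪ ⋃ i ∈ S, (cycleRemoved N M v).neighborSet i) = Set.univ :=
      Set.compl_empty_iff.mp he
    rw [hu, Set.ncard_univ, Nat.card_eq_fintype_card, Fintype.card_fin] at hfail
    omega
  obtain ⟨x, hx⟩ := hcompl
  rw [Set.mem_compl_iff, notMem_U] at hx
  obtain ⟨hxS, hall⟩ := hx
  obtain ⟨i₀, hi₀⟩ := hS
  obtain ⟨m, rfl⟩ : ∃ m, x = v m := by
    rcases hall i₀ hi₀ with ⟨k, _, h2⟩ | ⟨k, h2, _⟩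
    exacts [⟨k+1, h2⟩, ⟨k, h2⟩]
  have hsub : ∀ i ∈ S, i = v (m-1) ∨ i = v (m+1) := by
    intro i hi
    rcases hall i hi with ⟨k, h1, h2⟩ | ⟨k, h1, h2⟩
    · left; rw [h1]; congr 1; rw [hv h2]; ring
    · right; rw [h2]; congr 1; rw [hv h1]
  by_cases hA : v (m-1) ∈ S <;> by_cases hB : v (m+1) ∈ S
  · have hSeq : S = {v (m-1), v (m+1)} := by
      apply Finset.Subset.antisymm
      · intro i hi; rcases hsub i hi with h | h <;> simp [h]
      · intro j hj
        rcases Finset.mem_insert.mp hj with rfl | hj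
        · exact hA
        · rw [Finset.mem_singleton.mp hj]; exact hB
    have e2 : v (m+1) = v ((m-1)+2) := by congr 1; ring
    rw [hSeq, e2, ncard_U_pair v hM3 hM4 hv (m-1),
      Finset.sum_pair (fun h => fin_shift (fin2 hM3) (m-1) (hv h))] at hfail
    exact pair_case hN hM3 hv hsum (m-1) hfail
  · have hSeq : S = {v (m-1)} := by
      apply Finset.Subset.antisymm
      · intro i hi
        rcases hsub i hi with h | h
        · simp [h]
        · exact absurd (h ▸ hi) hB
      · simpa using hA
    rw [hSeq, ncard_U_singleton v hM3 hv (m-1), Finset.sum_singleton] at hfail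
    exact Or.inl (singleton_case hN hsum (m-1) hfail)
  · have hSeq : S = {v (m+1)} := by
      apply Finset.Subset.antisymm
      · intro i hi
        rcases hsub i hi with h | h
        · exact absurd (h ▸ hi) hA
        · simp [h]
      · simpa using hB
    rw [hSeq, ncard_U_singleton v hM3 hv (m+1), Finset.sum_singleton] at hfail
    exact Or.inl (singleton_case hN hsum (m+1) hfail)
  · rcases hsub i₀ hi₀ with h | h
    · exact absurd (h ▸ hi₀) hA
    · exact absurd (h ▸ hi₀) hB

end


/-- Lemma 3.4, case `M ≠ 4`: `𝔇(K_N) \ 𝔇(K_N \ E(C_M)) = 𝒳(C_M) ⊎ 𝒴(C_M)`. -/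
theorem stmt13 (N M : ℕ) [NeZero M] (hN : 5 ≤ N) (hM3 : 3 ≤ M) (hMN : M ≤ N)
    (hM4 : M ≠ 4) (v : Fin M → Fin N) (hv : Function.Injective v) :
    {c : Fin N → ℕ | DraconianD (⊤ : SimpleGraph (Fin N)) c ∧
        ¬ DraconianD (cycleRemoved N M v) c} = setX N M v ∪ setY N M v ∧
      Disjoint (setX N M v) (setY N M v) := by

  have hvne2 : ∀ i : Fin M, v i ≠ v (i+2) := fun i h => fin_shift (fin2 hM3) i (hv h)
  constructor
  · ext c
    simp only [Set.mem_setOf_eq, Set.mem_union]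
    constructor
    · rintro ⟨hd, hnd⟩
      have hsum := (dracTop_iff (by omega) c).mp hd
      have hnd' : ∃ S : Finset (Fin N), S.Nonempty ∧
          ((S : Set (Fin N)) ∪ ⋃ i ∈ S, (cycleRemoved N M v).neighborSet i).ncard
            ≤ ∑ i ∈ S, c i := by
        by_contra hc
        push_neg at hc
        exact hnd ⟨by simpa using hsum, fun S hS => hc S hS⟩
      obtain ⟨S, hS, hfail⟩ := hnd'
      exact forward_case hN hM3 hM4 hv hsum S hS hfail
    · rintro (⟨i, j, rfl⟩ | ⟨i, r, hr1, hr2, rfl⟩)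
      · refine ⟨(dracTop_iff (by omega) _).mpr ?_, ?_⟩
        · rw [Finset.sum_add_distrib]
          simp
          omega
        · intro hdrac
          have h2 := hdrac.2 {v i} ⟨v i, Finset.mem_singleton_self _⟩
          rw [ncard_U_singleton v hM3 hv i, Finset.sum_singleton,
            if_pos (rfl : (v i : Fin N) = v i)] at h2
          split at h2 <;> omega
      · refine ⟨(dracTop_iff (by omega) _).mpr ?_, ?_⟩
        · rw [Finset.sum_add_distrib,
            Finset.sum_ite_eq' Finset.univ (v i) (fun _ => r),
            Finset.sum_ite_eq' Finset.univ (v (i+2)) (fun _ => N - 1 - r),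
            if_pos (Finset.mem_univ _), if_pos (Finset.mem_univ _)]
          omega
        · intro hdrac
          have h2 := hdrac.2 {v i, v (i+2)} ⟨v i, by simp⟩
          rw [ncard_U_pair v hM3 hM4 hv i, Finset.sum_pair (hvne2 i),
            if_pos (rfl : (v i : Fin N) = v i),
            if_pos (rfl : (v (i+2) : Fin N) = v (i+2)),
            if_neg (hvne2 i), if_neg (Ne.symm (hvne2 i))] at h2
          omega
  · rw [Set.disjoint_left]
    rintro c ⟨i, j, rfl⟩ ⟨i', r, hr1, hr2, heq⟩
    have h := congrFun heq (v i)
    rw [if_pos (rfl : (v i : Fin N) = v i)] at h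
    by_cases h1 : v i = v i'
    · by_cases h2 : v i = v (i'+2)
      · exact hvne2 i' (h1.symm.trans h2)
      · rw [if_pos h1, if_neg h2] at h
        split at h <;> omega
    · rw [if_neg h1] at h
      by_cases h2 : v i = v (i'+2)
      · rw [if_pos h2] at h; split at h <;> omega
      · rw [if_neg h2] at h; split at h <;> omega
end

section
/- Let N >= 5 and let C be a 4-cycle in K_N with vertices v_0, v_1, v_2, v_3 (v_i adjacent to v_{i±1 mod 4}), and let G = K_N minus the edges of C. Then the set of D(K_N)-draconian sequences that fail to be D(G)-draconian equals the disjoint union X ⊎ Y ⊎ Z, where X = { (N−2)e_{v_i} + e_j : 0 <= i <= 3, j ∈ [N] }, Y = { r·e_{v_i} + (N−1−r)·e_{v_{i+2 mod 4}} : 0 <= i <= 3, 2 <= r <= N−3 }, and Z = { r·e_{v_i} + (N−2−r)·e_{v_{i+2 mod 4}} + e_s : 0 <= i <= 3, 1 <= r <= N−3, s ∈ [N]∖{v_i, v_{i+2 mod 4}} }. -/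
lemma dracTop {N : ℕ} (hN : 5 ≤ N) (c : Fin N → ℕ) :
    DraconianD (⊤ : SimpleGraph (Fin N)) c ↔ (∑ x, c x) = N - 1 := by
  constructor
  · intro h; simpa using h.1
  · intro h
    refine ⟨by simpa using h, fun S hS => ?_⟩
    obtain ⟨j, hj⟩ := hS
    have hU : ((S : Set (Fin N)) ∪ ⋃ i ∈ S, (⊤ : SimpleGraph (Fin N)).neighborSet i)
        = Set.univ := by
      apply Set.eq_univ_of_forall
      intro x
      by_cases hx : x = j
      · exact Or.inl (by simpa [hx] using hj)
      · exact Or.inr (Set.mem_biUnion hj (by simp [SimpleGraph.mem_neighborSet, Ne.symm hx, hx]))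
    rw [hU]
    have h2 : (∑ i ∈ S, c i) ≤ ∑ x, c x := Finset.sum_le_sum_of_subset (Finset.subset_univ S)
    rw [h] at h2
    simp only [Set.ncard_univ, Nat.card_eq_fintype_card, Fintype.card_fin]
    omega

lemma adj_iff {N : ℕ} (v : Fin 4 → Fin N) (a b : Fin N) :
    (cycleRemoved N 4 v).Adj a b ↔ a ≠ b ∧ (¬ ∃ i : Fin 4, a = v i ∧ b = v (i+1)) ∧
      (¬ ∃ i : Fin 4, b = v i ∧ a = v (i+1)) := by
  simp only [cycleRemoved, SimpleGraph.sdiff_adj, SimpleGraph.top_adj, SimpleGraph.fromRel_adj]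
  constructor
  · rintro ⟨hne, h2⟩
    exact ⟨hne, fun h => h2 ⟨hne, Or.inl h⟩, fun h => h2 ⟨hne, Or.inr h⟩⟩
  · rintro ⟨hne, h1, h2⟩
    exact ⟨hne, fun h => h.2.elim h1 h2⟩

lemma nbhd_cyc {N : ℕ} (v : Fin 4 → Fin N) (hv : Function.Injective v) (k : Fin 4) :
    ({v k} : Set (Fin N)) ∪ (cycleRemoved N 4 v).neighborSet (v k)
      = ({v (k+1), v (k+3)} : Set (Fin N))ᶜ := by
  ext b
  simp only [Set.mem_union, Set.mem_singleton_iff, SimpleGraph.mem_neighborSet, adj_iff,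
    Set.mem_compl_iff, Set.mem_insert_iff, not_or]
  constructor
  · rintro (rfl | ⟨hne, h1, h2⟩)
    · exact ⟨fun h => (by decide : ∀ k : Fin 4, k ≠ k + 1) k (hv h),
        fun h => (by decide : ∀ k : Fin 4, k ≠ k + 3) k (hv h)⟩
    · refine ⟨fun h => h1 ⟨k, rfl, h⟩, fun h => h2 ⟨k + 3, h, ?_⟩⟩
      rw [(by decide : ∀ k : Fin 4, k + 3 + 1 = k) k]
  · rintro ⟨h1, h3⟩
    by_cases hb : b = v k
    · exact Or.inl hb
    · refine Or.inr ⟨fun h => hb h.symm, ?_, ?_⟩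
      · rintro ⟨m, hm, hb'⟩
        have hmk : m = k := (hv hm).symm
        subst hmk
        exact h1 hb'
      · rintro ⟨m, hm, hb'⟩
        have hmk : m + 1 = k := hv hb'.symm
        have : m = k + 3 := (by decide : ∀ m k : Fin 4, m + 1 = k → m = k + 3) m k hmk
        exact h3 (by rw [← this]; exact hm)

lemma nbhd_other {N : ℕ} (v : Fin 4 → Fin N) (j : Fin N) (hj : ∀ k, j ≠ v k) :
    ({j} : Set (Fin N)) ∪ (cycleRemoved N 4 v).neighborSet j = Set.univ := by
  apply Set.eq_univ_of_forall
  intro x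
  by_cases hx : x = j
  · exact Or.inl hx
  · refine Or.inr ?_
    rw [SimpleGraph.mem_neighborSet, adj_iff]
    exact ⟨Ne.symm hx, fun ⟨k, hk, _⟩ => hj k hk, fun ⟨k, _, hk⟩ => hj (k+1) hk⟩

lemma ncard_pair_compl {N : ℕ} (a b : Fin N) (hab : a ≠ b) :
    (({a, b} : Set (Fin N))ᶜ).ncard = N - 2 := by
  have h1 := Set.ncard_add_ncard_compl ({a, b} : Set (Fin N))
  rw [Set.ncard_pair hab] at h1
  simp only [Nat.card_eq_fintype_card, Fintype.card_fin] at h1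
  omega

lemma fail_iff {N : ℕ} (hN : 5 ≤ N) (v : Fin 4 → Fin N) (hv : Function.Injective v)
    (c : Fin N → ℕ) (hsum : ∑ x, c x = N - 1) :
    ¬ DraconianD (cycleRemoved N 4 v) c ↔
      ∃ i : Fin 4, N - 2 ≤ c (v i) + c (v (i+2)) := by
  have hne2 : ∀ i : Fin 4, v i ≠ v (i + 2) :=
    fun i h => (by decide : ∀ i : Fin 4, i ≠ i + 2) i (hv h)
  constructor
  · -- hard direction, by contraposition
    intro hF
    by_contra hA
    push_neg at hA
    apply hF
    refine ⟨by simpa using hsum, fun S hS => ?_⟩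
    have hbound : ∀ T : Finset (Fin N), (∑ i ∈ T, c i) ≤ N - 1 := by
      intro T
      calc (∑ i ∈ T, c i) ≤ ∑ x, c x := Finset.sum_le_sum_of_subset (Finset.subset_univ T)
      _ = N - 1 := hsum
    set U := ((S : Set (Fin N)) ∪ ⋃ i ∈ S, (cycleRemoved N 4 v).neighborSet i) with hU
    have hsub : ∀ j ∈ S, ({j} : Set (Fin N)) ∪ (cycleRemoved N 4 v).neighborSet j ⊆ U := by
      intro j hj
      rintro x (rfl | hx)
      · exact Or.inl hj
      · exact Or.inr (Set.mem_biUnion hj hx)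
    by_cases hout : ∃ j ∈ S, ∀ k, j ≠ v k
    · -- U = univ
      obtain ⟨j, hjS, hj⟩ := hout
      have hUuniv : U = Set.univ :=
        Set.eq_univ_of_univ_subset (by rw [← nbhd_other v j hj]; exact hsub j hjS)
      rw [hUuniv, Set.ncard_univ, Nat.card_eq_fintype_card, Fintype.card_fin]
      have := hbound S; omega
    · push_neg at hout
      -- every element of S is some v k
      by_cases hadj : ∃ k : Fin 4, v k ∈ S ∧ v (k + 1) ∈ S
      · obtain ⟨k, hk1, hk2⟩ := hadj
        have hUuniv : U = Set.univ := by
          apply Set.eq_univ_of_forall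
          intro x
          by_cases hx : x = v (k+1) ∨ x = v (k+3)
          · have h2 := hsub _ hk2
            rw [nbhd_cyc v hv (k+1)] at h2
            apply h2
            simp only [Set.mem_compl_iff, Set.mem_insert_iff, Set.mem_singleton_iff, not_or]
            rw [(by decide : ∀ k : Fin 4, k + 1 + 1 = k + 2) k,
              (by decide : ∀ k : Fin 4, k + 1 + 3 = k) k]
            rcases hx with rfl | rfl
            · exact ⟨fun h => (by decide : ∀ k : Fin 4, k + 1 ≠ k + 2) k (hv h),
                fun h => (by decide : ∀ k : Fin 4, k + 1 ≠ k) k (hv h)⟩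
            · exact ⟨fun h => (by decide : ∀ k : Fin 4, k + 3 ≠ k + 2) k (hv h),
                fun h => (by decide : ∀ k : Fin 4, k + 3 ≠ k) k (hv h)⟩
          · have h1 := hsub _ hk1
            rw [nbhd_cyc v hv k] at h1
            apply h1
            simpa using hx
        rw [hUuniv, Set.ncard_univ, Nat.card_eq_fintype_card, Fintype.card_fin]
        have := hbound S; omega
      · push_neg at hadj
        obtain ⟨j, hjS⟩ := hS
        obtain ⟨k, rfl⟩ := hout j hjS
        -- S ⊆ {v k, v (k+2)}
        have hSsub : S ⊆ {v k, v (k + 2)} := by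
          intro x hx
          obtain ⟨m, rfl⟩ := hout x hx
          simp only [Finset.mem_insert, Finset.mem_singleton]
          rcases (by decide : ∀ m k : Fin 4, m = k ∨ m = k + 1 ∨ m = k + 2 ∨ m = k + 3) m k
            with rfl | rfl | rfl | rfl
          · exact Or.inl rfl
          · exact absurd hx (hadj k hjS)
          · exact Or.inr rfl
          · exact absurd (by rwa [(by decide : ∀ k : Fin 4, k + 3 + 1 = k) k]) (hadj (k+3) hx)
        have hsumS : (∑ i ∈ S, c i) ≤ c (v k) + c (v (k + 2)) := by
          calc (∑ i ∈ S, c i) ≤ ∑ i ∈ {v k, v (k+2)}, c i :=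
              Finset.sum_le_sum_of_subset hSsub
          _ = c (v k) + c (v (k + 2)) := Finset.sum_pair (hne2 k)
        have hUge : N - 2 ≤ U.ncard := by
          have h1 := hsub _ hjS
          rw [nbhd_cyc v hv k] at h1
          calc N - 2 = (({v (k+1), v (k+3)} : Set (Fin N))ᶜ).ncard :=
              (ncard_pair_compl _ _ (fun h =>
                (by decide : ∀ k : Fin 4, k + 1 ≠ k + 3) k (hv h))).symm
          _ ≤ U.ncard := Set.ncard_le_ncard h1 (Set.toFinite U)
        have := hA k
        omega
  · rintro ⟨i, hi⟩ hD
    have h2 := hD.2 {v i, v (i + 2)} ⟨v i, by simp⟩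
    rw [Finset.sum_pair (hne2 i)] at h2
    have hUle : ((({v i, v (i + 2)} : Finset (Fin N)) : Set (Fin N)) ∪
        ⋃ j ∈ ({v i, v (i + 2)} : Finset (Fin N)), (cycleRemoved N 4 v).neighborSet j).ncard
        ≤ N - 2 := by
      rw [← ncard_pair_compl (v (i+1)) (v (i+3))
        (fun h => (by decide : ∀ k : Fin 4, k + 1 ≠ k + 3) i (hv h))]
      apply Set.ncard_le_ncard _ (Set.toFinite _)
      intro x hx
      have key : x ∈ ({v i} : Set (Fin N)) ∪ (cycleRemoved N 4 v).neighborSet (v i) ∨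
          x ∈ ({v (i+2)} : Set (Fin N)) ∪ (cycleRemoved N 4 v).neighborSet (v (i+2)) := by
        rcases hx with hx | hx
        · rcases (by simpa using hx : x = v i ∨ x = v (i+2)) with rfl | rfl
          · exact Or.inl (Or.inl rfl)
          · exact Or.inr (Or.inl rfl)
        · simp only [Set.mem_iUnion, Finset.mem_coe, Finset.mem_insert,
            Finset.mem_singleton, exists_prop] at hx
          obtain ⟨j, hj, hxj⟩ := hx
          rcases hj with rfl | rfl
          · exact Or.inl (Or.inr hxj)
          · exact Or.inr (Or.inr hxj)
      rcases key with h | h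
      · rw [nbhd_cyc v hv i] at h
        exact h
      · rw [nbhd_cyc v hv (i+2)] at h
        rw [(by decide : ∀ i : Fin 4, i + 2 + 1 = i + 3) i,
          (by decide : ∀ i : Fin 4, i + 2 + 3 = i + 1) i] at h
        intro hmem
        exact h (by rcases (by simpa using hmem : x = v (i+1) ∨ x = v (i+3)) with rfl | rfl
                    · simp
                    · simp)
    omega

lemma sum_eq_one' {α : Type*} [DecidableEq α] (t : Finset α) (f : α → ℕ)
    (h : ∑ x ∈ t, f x = 1) : ∃ s ∈ t, f s = 1 ∧ ∀ x ∈ t, x ≠ s → f x = 0 := by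
  obtain ⟨s, hs, hfs⟩ : ∃ s ∈ t, f s ≠ 0 := by
    by_contra h0
    push_neg at h0
    rw [Finset.sum_eq_zero h0] at h
    omega
  have hsplit : f s + ∑ x ∈ t.erase s, f x = 1 := by
    rw [Finset.add_sum_erase t f hs]; exact h
  refine ⟨s, hs, by omega, fun x hx hxs => ?_⟩
  exact Finset.sum_eq_zero_iff.mp (by omega : ∑ x ∈ t.erase s, f x = 0) x
    (Finset.mem_erase.mpr ⟨hxs, hx⟩)

lemma x_big {N : ℕ} {v : Fin 4 → Fin N} {c : Fin N → ℕ} (h : c ∈ setX N 4 v) :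
    ∃ x, N - 2 ≤ c x := by
  obtain ⟨i, j, rfl⟩ := h
  exact ⟨v i, by simp⟩

lemma y_small {N : ℕ} (hN : 5 ≤ N) {v : Fin 4 → Fin N} (hv : Function.Injective v)
    {c : Fin N → ℕ} (h : c ∈ setY N 4 v) : ∀ x, c x ≤ N - 3 ∧ c x ≠ 1 := by
  obtain ⟨i, r, hr1, hr2, rfl⟩ := h
  intro x
  have hne : v i ≠ v (i + 2) := fun h => (by decide : ∀ i : Fin 4, i ≠ i + 2) i (hv h)
  by_cases h1 : x = v i
  · subst h1
    simp [hne]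
    omega
  · by_cases h2 : x = v (i + 2)
    · subst h2
      simp [Ne.symm hne]
      omega
    · simp only [if_neg h1, if_neg h2]
      omega

lemma z_small {N : ℕ} (hN : 5 ≤ N) {v : Fin 4 → Fin N} (hv : Function.Injective v)
    {c : Fin N → ℕ} (h : c ∈ setZ N 4 v) : (∀ x, c x ≤ N - 3) ∧ ∃ x, c x = 1 := by
  obtain ⟨i, r, s, hr1, hr2, hs1, hs2, rfl⟩ := h
  have hne : v i ≠ v (i + 2) := fun h => (by decide : ∀ i : Fin 4, i ≠ i + 2) i (hv h)
  constructor
  · intro x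
    by_cases h1 : x = v i
    · subst h1
      simp [hne, Ne.symm hs1]
      omega
    · by_cases h2 : x = v (i + 2)
      · subst h2
        simp [Ne.symm hne, Ne.symm hs2]
        omega
      · by_cases h3 : x = s
        · subst h3
          simp [hs1, hs2]
          omega
        · simp only [if_neg h1, if_neg h2, if_neg h3]
          omega
  · exact ⟨s, by simp [hs1, hs2]⟩

/-- Lemma 3.4, case `M = 4`:
`𝔇(K_N) \ 𝔇(K_N \ E(C_4)) = 𝒳(C_4) ⊎ 𝒴(C_4) ⊎ 𝒵(C_4)`. -/
theorem stmt14 (N : ℕ) (hN : 5 ≤ N) (v : Fin 4 → Fin N) (hv : Function.Injective v) :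
    {c : Fin N → ℕ | DraconianD (⊤ : SimpleGraph (Fin N)) c ∧
        ¬ DraconianD (cycleRemoved N 4 v) c} = setX N 4 v ∪ setY N 4 v ∪ setZ N 4 v ∧
      Disjoint (setX N 4 v) (setY N 4 v) ∧ Disjoint (setX N 4 v) (setZ N 4 v) ∧
      Disjoint (setY N 4 v) (setZ N 4 v) := by
  have hne2 : ∀ i : Fin 4, v i ≠ v (i + 2) :=
    fun i h => (by decide : ∀ i : Fin 4, i ≠ i + 2) i (hv h)
  refine ⟨?_, ?_, ?_, ?_⟩
  · ext c
    simp only [Set.mem_setOf_eq, Set.mem_union]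
    rw [dracTop hN]
    constructor
    · rintro ⟨hsum, hF⟩
      obtain ⟨i, hi⟩ := (fail_iff hN v hv c hsum).mp hF
      have hsplit : (∑ x ∈ Finset.univ \ {v i, v (i + 2)}, c x) +
          (c (v i) + c (v (i + 2))) = N - 1 := by
        rw [← Finset.sum_pair (hne2 i), Finset.sum_sdiff (Finset.subset_univ _)]
        exact hsum
      rcases (by omega : (∑ x ∈ Finset.univ \ {v i, v (i + 2)}, c x) = 0 ∨
          (∑ x ∈ Finset.univ \ {v i, v (i + 2)}, c x) = 1) with h0 | h1
      · -- two nonzero coordinates, a + b = N - 1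
        have hz : ∀ x, x ≠ v i → x ≠ v (i + 2) → c x = 0 := by
          intro x hx1 hx2
          exact Finset.sum_eq_zero_iff.mp h0 x (by simp [hx1, hx2])
        have hab : c (v i) + c (v (i + 2)) = N - 1 := by omega
        rcases (by omega : c (v (i + 2)) = 0 ∨ c (v (i + 2)) = 1 ∨ c (v i) = 0 ∨
            c (v i) = 1 ∨ (2 ≤ c (v i) ∧ c (v i) ≤ N - 3)) with hb | hb | ha | ha | ha
        · refine Or.inl (Or.inl ⟨i, v i, funext fun x => ?_⟩)
          by_cases h1 : x = v i
          · subst h1; simp; omega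
          · by_cases h2 : x = v (i + 2)
            · subst h2; simp [Ne.symm (hne2 i)]; omega
            · simp [h1]; exact hz x h1 h2
        · refine Or.inl (Or.inl ⟨i, v (i + 2), funext fun x => ?_⟩)
          by_cases h1 : x = v i
          · subst h1; simp [hne2 i]; omega
          · by_cases h2 : x = v (i + 2)
            · subst h2; simp [Ne.symm (hne2 i)]; omega
            · simp [h1, h2]; exact hz x h1 h2
        · refine Or.inl (Or.inl ⟨i + 2, v (i + 2), funext fun x => ?_⟩)
          by_cases h1 : x = v i
          · subst h1; simp [hne2 i]; exact ha
          · by_cases h2 : x = v (i + 2)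
            · subst h2; simp; omega
            · simp [h2]; exact hz x h1 h2
        · refine Or.inl (Or.inl ⟨i + 2, v i, funext fun x => ?_⟩)
          by_cases h1 : x = v i
          · subst h1; simp [hne2 i]; omega
          · by_cases h2 : x = v (i + 2)
            · subst h2; simp [Ne.symm (hne2 i)]; omega
            · simp [h1, h2]; exact hz x h1 h2
        · refine Or.inl (Or.inr ⟨i, c (v i), ha.1, ha.2, funext fun x => ?_⟩)
          by_cases h1 : x = v i
          · subst h1; simp [hne2 i]
          · by_cases h2 : x = v (i + 2)
            · subst h2; simp [Ne.symm (hne2 i)]; omega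
            · simp [h1, h2]; exact hz x h1 h2
      · -- one extra coordinate with value 1, a + b = N - 2
        obtain ⟨s, hsmem, hcs, hz0⟩ := sum_eq_one' _ _ h1
        have hs1 : s ≠ v i := by
          intro h; rw [h] at hsmem; simp at hsmem
        have hs2 : s ≠ v (i + 2) := by
          intro h; rw [h] at hsmem; simp at hsmem
        have hz : ∀ x, x ≠ v i → x ≠ v (i + 2) → x ≠ s → c x = 0 := by
          intro x hx1 hx2 hx3
          exact hz0 x (by simp [hx1, hx2]) hx3
        have hab : c (v i) + c (v (i + 2)) = N - 2 := by omega
        rcases (by omega : c (v (i + 2)) = 0 ∨ c (v i) = 0 ∨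
            (1 ≤ c (v i) ∧ c (v i) ≤ N - 3)) with hb | ha | ha
        · refine Or.inl (Or.inl ⟨i, s, funext fun x => ?_⟩)
          by_cases h1 : x = v i
          · subst h1; simp [Ne.symm hs1]; omega
          · by_cases h2 : x = v (i + 2)
            · subst h2; simp [Ne.symm (hne2 i), Ne.symm hs2]; exact hb
            · by_cases h3 : x = s
              · subst h3; simp [hs1]; exact hcs
              · simp [h1, h3]; exact hz x h1 h2 h3
        · refine Or.inl (Or.inl ⟨i + 2, s, funext fun x => ?_⟩)
          by_cases h1 : x = v i
          · subst h1; simp [hne2 i, Ne.symm hs1]; exact ha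
          · by_cases h2 : x = v (i + 2)
            · subst h2; simp [Ne.symm hs2]; omega
            · by_cases h3 : x = s
              · subst h3; simp [hs2]; exact hcs
              · simp [h2, h3]; exact hz x h1 h2 h3
        · refine Or.inr ⟨i, c (v i), s, ha.1, ha.2, hs1, hs2, funext fun x => ?_⟩
          by_cases h1 : x = v i
          · subst h1; simp [hne2 i, Ne.symm hs1]
          · by_cases h2 : x = v (i + 2)
            · subst h2; simp [Ne.symm (hne2 i), Ne.symm hs2]; omega
            · by_cases h3 : x = s
              · subst h3; simp [hs1, hs2]; exact hcs
              · simp [h1, h2, h3]; exact hz x h1 h2 h3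
    · rintro ((⟨i, j, rfl⟩ | ⟨i, r, hr1, hr2, rfl⟩) | ⟨i, r, s, hr1, hr2, hs1, hs2, rfl⟩)
      · have hsum : ∑ x, ((if x = v i then N - 2 else 0) + (if x = j then 1 else 0)) = N - 1 := by
          rw [Finset.sum_add_distrib]
          simp only [Finset.sum_ite_eq', Finset.mem_univ, if_true]
          omega
        refine ⟨hsum, (fail_iff hN v hv _ hsum).mpr ⟨i, ?_⟩⟩
        have h1 : (if v i = v i then N - 2 else 0) = N - 2 := by simp
        omega
      · have hsum : ∑ x, ((if x = v i then r else 0) +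
            (if x = v (i + 2) then N - 1 - r else 0)) = N - 1 := by
          rw [Finset.sum_add_distrib]
          simp only [Finset.sum_ite_eq', Finset.mem_univ, if_true]
          omega
        refine ⟨hsum, (fail_iff hN v hv _ hsum).mpr ⟨i, ?_⟩⟩
        simp only [if_pos rfl, if_neg (hne2 i), if_neg (Ne.symm (hne2 i)), if_true]
        omega
      · have hsum : ∑ x, ((if x = v i then r else 0) +
            (if x = v (i + 2) then N - 2 - r else 0) + (if x = s then 1 else 0)) = N - 1 := by
          rw [Finset.sum_add_distrib, Finset.sum_add_distrib]
          simp only [Finset.sum_ite_eq', Finset.mem_univ, if_true]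
          omega
        refine ⟨hsum, (fail_iff hN v hv _ hsum).mpr ⟨i, ?_⟩⟩
        simp only [if_pos rfl, if_neg (hne2 i), if_neg (Ne.symm (hne2 i)),
          if_neg (Ne.symm hs1), if_neg (Ne.symm hs2), if_true]
        omega
  · rw [Set.disjoint_left]
    intro c hX hY
    obtain ⟨x, hx⟩ := x_big hX
    have := (y_small hN hv hY x).1
    omega
  · rw [Set.disjoint_left]
    intro c hX hZ
    obtain ⟨x, hx⟩ := x_big hX
    have := (z_small hN hv hZ).1 x
    omega
  · rw [Set.disjoint_left]
    intro c hY hZ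
    obtain ⟨x, hx⟩ := (z_small hN hv hZ).2
    exact (y_small hN hv hY x).2 hx
end
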